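/- arXiv:2602.19132 — 14 statements merged into one kernel-verified Lean document; each statement's English description precedes it below -/
import Mathlib

section
/- For every integer N ≥ 1, the derivative of the Chebyshev polynomial of the second kind satisfies z^{(N-1)/2} · U_N'((z^{1/2} + z^{-1/2})/2) = 2 Σ_{j=0}^{N-1} (j+1)(N-j) z^j as an identity of Laurent polynomials in z^{1/2}. -/
open Polynomial Finset

lemma shift_aux (m : ℕ) (w : ℂ) (f : ℕ → ℂ) (hf : f 0 = 0) :
    ∑ j ∈ range (m+1), f j * w^(2*j) = w^2 * ∑ j ∈ range m, f (j+1) * w^(2*j) := by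
  rw [Finset.sum_range_succ', hf, zero_mul, add_zero, Finset.mul_sum]
  refine Finset.sum_congr rfl fun j _ => ?_
  rw [show 2*(j+1) = 2*j + 2 by ring, pow_add]
  ring

lemma lemA (n : ℕ) (w : ℂ) (hw : w ≠ 0) :
    w^n * (Polynomial.Chebyshev.U ℂ n).eval ((w + w⁻¹)/2) = ∑ k ∈ range (n+1), w^(2*k) := by
  have hinv : w * w⁻¹ = 1 := mul_inv_cancel₀ hw
  induction n using Nat.twoStepInduction with
  | zero => simp
  | one =>
    simp only [Nat.cast_one, Polynomial.Chebyshev.U_one]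
    simp [Finset.sum_range_succ]
    field_simp
    ring
  | more n ih1 ih2 =>
    have h := Polynomial.Chebyshev.U_add_two ℂ n
    have hcast : ((n + 2 : ℕ) : ℤ) = (n : ℤ) + 2 := by push_cast; ring
    rw [hcast, h]
    have hc1 : ((n + 1 : ℕ) : ℤ) = (n : ℤ) + 1 := by push_cast; ring
    rw [hc1] at ih2
    simp only [eval_sub, eval_mul, eval_ofNat, eval_X]
    rw [Finset.sum_range_succ (n := n + 2), Finset.sum_range_succ (n := n + 1)]
    have e1 := ih2
    have e2 := ih1
    have hw2 : w^(n+2) = w^(n+1) * w := by ring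
    -- express goal in terms of e1 e2
    have hx : w^(n+2) * (2 * ((w + w⁻¹)/2) * eval ((w + w⁻¹)/2) (Polynomial.Chebyshev.U ℂ (n+1))
        - eval ((w + w⁻¹)/2) (Polynomial.Chebyshev.U ℂ n))
        = (w^2 + 1) * (w^(n+1) * eval ((w + w⁻¹)/2) (Polynomial.Chebyshev.U ℂ (n+1)))
          - w^2 * (w^n * eval ((w + w⁻¹)/2) (Polynomial.Chebyshev.U ℂ n)) := by
      field_simp
      ring
    rw [hx, e1, e2, Finset.sum_range_succ (n := n + 1)]
    rw [show 2*(n+2) = 2*(n+1)+2 by ring, show 2*(n+1) = 2*n+2 by ring, pow_add, pow_add]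
    ring

lemma sumid (n : ℕ) (w : ℂ) :
    2 * (∑ k ∈ range (n+3), w^(2*k))
      + (w^2+1) * (2 * ∑ j ∈ range (n+2), ((j:ℂ)+1)*((n:ℂ)+2-(j:ℂ))*w^(2*j))
      - w^2 * (2 * ∑ j ∈ range (n+1), ((j:ℂ)+1)*((n:ℂ)+1-(j:ℂ))*w^(2*j))
    = 2 * ∑ j ∈ range (n+3), ((j:ℂ)+1)*((n:ℂ)+3-(j:ℂ))*w^(2*j) := by
  have h1 : w^2 * ∑ j ∈ range (n+2), ((j:ℂ)+1)*((n:ℂ)+2-(j:ℂ))*w^(2*j)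
      = ∑ j ∈ range (n+3), (j:ℂ)*((n:ℂ)+3-(j:ℂ))*w^(2*j) := by
    rw [Finset.sum_range_succ' (fun j => (j:ℂ)*((n:ℂ)+3-(j:ℂ))*w^(2*j)) (n+2)]
    rw [Finset.mul_sum]
    norm_num
    refine Finset.sum_congr rfl fun j _ => ?_
    rw [show 2*(j+1) = 2*j + 2 by ring, pow_add]
    push_cast
    ring
  have h2' : w^2 * ∑ j ∈ range (n+1), ((j:ℂ)+1)*((n:ℂ)+1-(j:ℂ))*w^(2*j)
      = ∑ j ∈ range (n+2), (j:ℂ)*((n:ℂ)+2-(j:ℂ))*w^(2*j) := by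
    rw [Finset.sum_range_succ' (fun j => (j:ℂ)*((n:ℂ)+2-(j:ℂ))*w^(2*j)) (n+1)]
    rw [Finset.mul_sum]
    norm_num
    refine Finset.sum_congr rfl fun j _ => ?_
    rw [show 2*(j+1) = 2*j + 2 by ring, pow_add]
    push_cast
    ring
  have h2 : w^2 * ∑ j ∈ range (n+1), ((j:ℂ)+1)*((n:ℂ)+1-(j:ℂ))*w^(2*j)
      = ∑ j ∈ range (n+3), (j:ℂ)*((n:ℂ)+2-(j:ℂ))*w^(2*j) := by
    rw [h2', Finset.sum_range_succ (fun j => (j:ℂ)*((n:ℂ)+2-(j:ℂ))*w^(2*j)) (n+2)]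
    have : (n:ℂ)+2-((n+2:ℕ):ℂ) = 0 := by push_cast; ring
    rw [this, mul_zero, zero_mul, add_zero]
  have h3 : ∑ j ∈ range (n+2), ((j:ℂ)+1)*((n:ℂ)+2-(j:ℂ))*w^(2*j)
      = ∑ j ∈ range (n+3), ((j:ℂ)+1)*((n:ℂ)+2-(j:ℂ))*w^(2*j) := by
    rw [Finset.sum_range_succ (fun j => ((j:ℂ)+1)*((n:ℂ)+2-(j:ℂ))*w^(2*j)) (n+2)]
    have : (n:ℂ)+2-((n+2:ℕ):ℂ) = 0 := by push_cast; ring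
    rw [this, mul_zero, zero_mul, add_zero]
  have final : 2 * (∑ k ∈ range (n+3), w^(2*k))
      + 2 * (∑ j ∈ range (n+3), (j:ℂ)*((n:ℂ)+3-(j:ℂ))*w^(2*j))
      + 2 * (∑ j ∈ range (n+3), ((j:ℂ)+1)*((n:ℂ)+2-(j:ℂ))*w^(2*j))
      - 2 * (∑ j ∈ range (n+3), (j:ℂ)*((n:ℂ)+2-(j:ℂ))*w^(2*j))
      = 2 * ∑ j ∈ range (n+3), ((j:ℂ)+1)*((n:ℂ)+3-(j:ℂ))*w^(2*j) := by
    simp only [Finset.mul_sum, ← Finset.sum_add_distrib, ← Finset.sum_sub_distrib]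
    exact Finset.sum_congr rfl fun j _ => by ring
  linear_combination final + 2*h1 + 2*h3 - 2*h2

lemma lemB (n : ℕ) (w : ℂ) (hw : w ≠ 0) :
    w^n * (Polynomial.derivative (Polynomial.Chebyshev.U ℂ (n+1 : ℕ))).eval ((w + w⁻¹)/2)
      = 2 * ∑ j ∈ range (n+1), ((j:ℂ)+1)*((n:ℂ)+1-(j:ℂ))*w^(2*j) := by
  have hinv : w * w⁻¹ = 1 := mul_inv_cancel₀ hw
  induction n using Nat.twoStepInduction with
  | zero =>
    norm_num [Polynomial.Chebyshev.U_one]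
  | one =>
    have h2 : ((2:ℕ) : ℤ) = 2 := by norm_num
    rw [h2, Polynomial.Chebyshev.U_two]
    simp [Finset.sum_range_succ]
    field_simp
    ring
  | more n ih1 ih2 =>
    have hd := congrArg Polynomial.derivative (Polynomial.Chebyshev.U_add_two ℂ ((n:ℤ)+1))
    simp only [derivative_sub, derivative_mul, derivative_X, derivative_ofNat, mul_one] at hd
    have hc3 : ((n + 3 : ℕ) : ℤ) = ((n:ℤ)+1) + 2 := by push_cast; ring
    have hc2 : ((n + 2 : ℕ) : ℤ) = ((n:ℤ)+1) + 1 := by push_cast; ring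
    have hc1 : ((n + 1 : ℕ) : ℤ) = (n:ℤ)+1 := by push_cast; ring
    rw [hc3, hd]
    rw [hc2, show n+1+1 = n+2 from rfl] at ih2
    rw [hc1] at ih1
    have hA := lemA (n+2) w hw
    rw [show ((n + 2 : ℕ) : ℤ) = ((n:ℤ)+1) + 1 by push_cast; ring,
      show n+2+1 = n+3 from rfl] at hA
    rw [show n+2+1 = n+3 from rfl]
    set x := (w + w⁻¹)/2 with hx
    set A := eval x (Polynomial.Chebyshev.U ℂ (((n:ℤ)+1)+1)) with hAdef
    set D2 := eval x (Polynomial.derivative (Polynomial.Chebyshev.U ℂ (((n:ℤ)+1)+1))) with hD2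
    set D1 := eval x (Polynomial.derivative (Polynomial.Chebyshev.U ℂ ((n:ℤ)+1))) with hD1
    simp only [eval_sub, eval_add, eval_mul, eval_ofNat, eval_X, eval_zero, zero_mul, zero_add]
    push_cast at ih2 ⊢
    simp only [show ((n:ℂ)+1+1) = (n:ℂ)+2 from by ring,
      show ((n:ℂ)+2+1) = (n:ℂ)+3 from by ring] at ih2 ⊢
    have hs := sumid n w
    linear_combination 2*hA + (w^2+1)*ih2 - w^2*ih1 + hs + (w^(n+1)*D2)*hinv

/-- For `N ≥ 1`, `z^{(N-1)/2} U_N'((√z+1/√z)/2) = 2 ∑_{j=0}^{N-1} (j+1)(N-j) z^j`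
as a Laurent identity in `w = √z`. -/
theorem stmt1 (N : ℕ) (hN : 1 ≤ N) (w : ℂ) (hw : w ≠ 0) :
    w ^ (N - 1) * (Polynomial.derivative (Polynomial.Chebyshev.U ℂ N)).eval ((w + w⁻¹) / 2) =
      2 * ∑ j ∈ Finset.range N, ((j : ℂ) + 1) * ((N : ℂ) - j) * w ^ (2 * j) := by
  obtain ⟨n, rfl⟩ : ∃ n, N = n + 1 := ⟨N - 1, (Nat.succ_pred_eq_of_pos hN).symm⟩
  have h := lemB n w hw
  rw [show n + 1 - 1 = n from rfl]
  push_cast at h ⊢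
  exact h
end

section
/- For all integers 0 ≤ s ≤ N, the identity z^{(N-s)/2} · U_N^{(s)}((z^{1/2} + z^{-1/2})/2) = 2^s · s! · Σ_{j=0}^{N-s} C(N-j, s) C(s+j, s) z^j holds as an identity of Laurent polynomials in z^{1/2}. -/
open Polynomial Finset

noncomputable def Rhs (n s : ℕ) (w : ℂ) : ℂ :=
  2 ^ s * (Nat.factorial s : ℂ) *
    ∑ j ∈ Finset.range (n - s + 1),
      ((n - j).choose s : ℂ) * ((s + j).choose s : ℂ) * w ^ (2 * j)

lemma Rhs_ext (n s M : ℕ) (w : ℂ) (hM : n - s + 1 ≤ M) (h : M ≤ n - s + 1 ∨ 1 ≤ s) :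
    Rhs n s w = 2 ^ s * (Nat.factorial s : ℂ) *
      ∑ j ∈ Finset.range M, ((n - j).choose s : ℂ) * ((s + j).choose s : ℂ) * w ^ (2 * j) := by
  unfold Rhs
  congr 1
  apply Finset.sum_subset (Finset.range_subset_range.2 hM)
  intro j hjM hj
  simp only [Finset.mem_range, not_lt] at hjM hj
  have : (n - j).choose s = 0 := Nat.choose_eq_zero_of_lt (by omega)
  simp [this]

lemma shift_sum (m : ℕ) (w : ℂ) (c : ℕ → ℂ) (hc : c m = 0) :
    w ^ 2 * ∑ j ∈ Finset.range (m + 1), c j * w ^ (2 * j) =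
      ∑ j ∈ Finset.range (m + 1), (if j = 0 then 0 else c (j - 1)) * w ^ (2 * j) := by
  rw [Finset.sum_range_succ' (fun j => (if j = 0 then 0 else c (j - 1)) * w ^ (2 * j)) m]
  simp only [Nat.succ_ne_zero, if_false, Nat.add_sub_cancel, if_true, mul_zero, pow_zero,
    add_zero, reduceIte, zero_mul]
  rw [Finset.mul_sum, Finset.sum_range_succ, hc]
  simp only [zero_mul, mul_zero, add_zero]
  apply Finset.sum_congr rfl
  intro j hj
  rw [show 2 * (j + 1) = 2 * j + 2 from by ring, pow_add]
  ring

lemma comb_rec (n s : ℕ) (w : ℂ) :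
    Rhs (n + 2) s w = (w ^ 2 + 1) * Rhs (n + 1) s w + 2 * (s : ℂ) * Rhs (n + 1) (s - 1) w
      - w ^ 2 * Rhs n s w := by
  rcases s with _ | t
  · -- s = 0
    have hR : ∀ m : ℕ, Rhs m 0 w = ∑ j ∈ Finset.range (m + 1), w ^ (2 * j) := by
      intro m; simp [Rhs]
    simp only [hR]
    rw [Finset.sum_range_succ (fun j => w ^ (2 * j)) (n + 2),
        Finset.sum_range_succ (fun j => w ^ (2 * j)) (n + 1)]
    push_cast
    ring
  · -- s = t + 1
    simp only [Nat.add_sub_cancel]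
    have e1 := Rhs_ext (n + 2) (t + 1) (n + 2) w (by omega) (by omega)
    have e2 := Rhs_ext (n + 1) (t + 1) (n + 2) w (by omega) (by omega)
    have e3 := Rhs_ext (n + 1) t (n + 2) w (by omega) (by omega)
    have e4 := Rhs_ext n (t + 1) (n + 2) w (by omega) (by omega)
    rw [e1, e2, e3, e4]
    have h2 := shift_sum (n + 1) w
      (fun j => ((n + 1 - j).choose (t + 1) : ℂ) * (((t + 1) + j).choose (t + 1) : ℂ)) (by simp)
    have h4 := shift_sum (n + 1) w
      (fun j => ((n - j).choose (t + 1) : ℂ) * (((t + 1) + j).choose (t + 1) : ℂ)) (by simp)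
    have hK : 2 * (((t : ℂ) + 1)) * (2 ^ t * (t.factorial : ℂ)) =
        2 ^ (t + 1) * ((t + 1).factorial : ℂ) := by
      push_cast [Nat.factorial_succ]; ring
    have hpure :
        (∑ j ∈ Finset.range (n + 2), ((n + 2 - j).choose (t + 1) : ℂ) * (((t + 1) + j).choose (t + 1) : ℂ) * w ^ (2 * j))
        = (∑ j ∈ Finset.range (n + 2), ((n + 1 - j).choose (t + 1) : ℂ) * (((t + 1) + j).choose (t + 1) : ℂ) * w ^ (2 * j))
        + (∑ j ∈ Finset.range (n + 2),
            (if j = 0 then 0 else ((n + 1 - (j - 1)).choose (t + 1) : ℂ) * (((t + 1) + (j - 1)).choose (t + 1) : ℂ)) * w ^ (2 * j))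
        + (∑ j ∈ Finset.range (n + 2), ((n + 1 - j).choose t : ℂ) * ((t + j).choose t : ℂ) * w ^ (2 * j))
        - (∑ j ∈ Finset.range (n + 2),
            (if j = 0 then 0 else ((n - (j - 1)).choose (t + 1) : ℂ) * (((t + 1) + (j - 1)).choose (t + 1) : ℂ)) * w ^ (2 * j)) := by
      rw [← Finset.sum_add_distrib, ← Finset.sum_add_distrib, ← Finset.sum_sub_distrib]
      apply Finset.sum_congr rfl
      intro j hj
      simp only [Finset.mem_range] at hj
      rcases j with _ | k
      · simp only [reduceIte, zero_mul, add_zero, sub_zero, Nat.sub_zero, Nat.add_zero]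
        rw [show n + 2 = (n + 1) + 1 from rfl, Nat.choose_succ_succ (n + 1) t]
        simp only [Nat.choose_self]
        push_cast
        ring
      · have hk : k ≤ n := by omega
        simp only [Nat.succ_ne_zero, if_false, Nat.add_sub_cancel, reduceIte]
        have r1 : n + 2 - (k + 1) = (n - k) + 1 := by omega
        have r2 : n + 1 - (k + 1) = n - k := by omega
        have r3 : n + 1 - k = (n - k) + 1 := by omega
        have r4 : (t + 1) + (k + 1) = (t + k + 1) + 1 := by omega
        have r5 : (t + 1) + k = t + k + 1 := by omega
        have r6 : t + (k + 1) = t + k + 1 := by omega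
        rw [r1, r2, r3, r4, r5, r6,
          Nat.choose_succ_succ (n - k) t, Nat.choose_succ_succ (t + k + 1) t]
        push_cast
        ring
    push_cast
    linear_combination (2 ^ (t + 1) * ((t + 1).factorial : ℂ)) * hpure
      - (2 ^ (t + 1) * ((t + 1).factorial : ℂ)) * h2
      + (2 ^ (t + 1) * ((t + 1).factorial : ℂ)) * h4
      - (∑ j ∈ Finset.range (n + 2), ((n + 1 - j).choose t : ℂ) * ((t + j).choose t : ℂ) * w ^ (2 * j)) * hK

lemma iter_deriv_two_X_mul : ∀ (s : ℕ) (p : ℂ[X]),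
    derivative^[s + 1] (2 * X * p) =
      2 * X * derivative^[s + 1] p + C (2 * ((s : ℂ) + 1)) * derivative^[s] p := by
  intro s
  induction s with
  | zero =>
    intro p
    simp [derivative_mul, map_ofNat]
    ring
  | succ s ih =>
    intro p
    rw [Function.iterate_succ_apply]
    have hd : derivative (2 * X * p) = 2 * X * derivative p + 2 * p := by
      simp [derivative_mul]; ring
    have h2 : ∀ (k : ℕ) (q : ℂ[X]), derivative^[k] (2 * q) = 2 * derivative^[k] q := by
      intro k q
      rw [two_mul, iterate_map_add, ← two_mul]
    rw [hd, iterate_map_add, ih (derivative p), h2 (s + 1) p,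
      ← Function.iterate_succ_apply derivative (s + 1) p,
      ← Function.iterate_succ_apply derivative s p]
    have hC : (C (2 * (((s : ℂ) + 1) + 1)) : ℂ[X]) = C (2 * ((s : ℂ) + 1)) + 2 := by
      rw [show (2 : ℂ) * (((s : ℂ) + 1) + 1) = 2 * ((s : ℂ) + 1) + 2 by ring, map_add, map_ofNat]
    push_cast
    rw [hC]
    ring

lemma main_lemma (N : ℕ) : ∀ (s : ℕ) (w : ℂ), w ≠ 0 →
    w ^ N * (derivative^[s] (Polynomial.Chebyshev.U ℂ (N : ℤ))).eval ((w + w⁻¹) / 2) =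
      w ^ s * Rhs N s w := by
  induction N using Nat.twoStepInduction with
  | zero =>
    intro s w hw
    have h0 : Polynomial.Chebyshev.U ℂ ((0 : ℕ) : ℤ) = 1 := by
      norm_num [Polynomial.Chebyshev.U_zero]
    rw [h0]
    rcases s with _ | u
    · simp [Rhs]
    · rw [Polynomial.iterate_derivative_eq_zero (by simp : (1 : ℂ[X]).natDegree < u + 1)]
      have : (0 : ℕ).choose (u + 1) = 0 := Nat.choose_eq_zero_of_lt (by omega)
      simp [Rhs, this]
  | one =>
    intro s w hw
    have h1 : Polynomial.Chebyshev.U ℂ ((1 : ℕ) : ℤ) = 2 * X := by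
      norm_num [Polynomial.Chebyshev.U_one]
    rw [h1]
    rcases s with _ | _ | u
    · simp only [Function.iterate_zero, id_eq, eval_mul, eval_ofNat, eval_X, pow_zero, one_mul,
        pow_one]
      rw [Rhs]
      norm_num [Finset.sum_range_succ]
      field_simp
      ring
    · have hd : derivative^[1] (2 * X : ℂ[X]) = C 2 := by
        simp [derivative_mul, map_ofNat]
      rw [hd]
      rw [Rhs]
      norm_num
    · rw [Polynomial.iterate_derivative_eq_zero
        (lt_of_le_of_lt (natDegree_mul_le.trans (by simp)) (by omega : 1 < u + 2))]
      have : (1 : ℕ).choose (u + 2) = 0 := Nat.choose_eq_zero_of_lt (by omega)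
      simp [Rhs, this]
  | more N ih1 ih0 =>
    intro s w hw
    have hU : Polynomial.Chebyshev.U ℂ ((N + 2 : ℕ) : ℤ) =
        2 * X * Polynomial.Chebyshev.U ℂ ((N + 1 : ℕ) : ℤ)
          - Polynomial.Chebyshev.U ℂ ((N : ℕ) : ℤ) := by
      push_cast
      exact Polynomial.Chebyshev.U_add_two ℂ (N : ℤ)
    have h2x : 2 * ((w + w⁻¹) / 2) * w = w ^ 2 + 1 := by
      field_simp
    have hc := comb_rec N s w
    rw [hU, iterate_map_sub]
    rcases s with _ | t
    · -- s = 0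
      have hN1 := ih0 0 w hw
      have hN := ih1 0 w hw
      simp only [Function.iterate_zero, id_eq, eval_sub, eval_mul, eval_ofNat, eval_X,
        pow_zero, one_mul] at hN1 hN hc ⊢
      push_cast at hN1 hN hc ⊢
      linear_combination (w ^ (N + 1) * ((Polynomial.Chebyshev.U ℂ ((N : ℤ) + 1)).eval ((w + w⁻¹) / 2))) * h2x
        + (w ^ 2 + 1) * hN1 - w ^ 2 * hN - hc
    · -- s = t + 1
      have h1 := ih0 (t + 1) w hw
      have h2 := ih0 t w hw
      have h0 := ih1 (t + 1) w hw
      rw [iter_deriv_two_X_mul t (Polynomial.Chebyshev.U ℂ ((N + 1 : ℕ) : ℤ))]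
      simp only [eval_sub, eval_add, eval_mul, eval_ofNat, eval_X, eval_C,
        Nat.add_sub_cancel] at hc ⊢
      push_cast at h1 h2 h0 hc ⊢
      linear_combination (w ^ (N + 1) * ((derivative^[t + 1] (Polynomial.Chebyshev.U ℂ ((N : ℤ) + 1))).eval ((w + w⁻¹) / 2))) * h2x
        + (w ^ 2 + 1) * h1 + 2 * ((t : ℂ) + 1) * w * h2 - w ^ 2 * h0 - w ^ (t + 1) * hc

/-- For `0 ≤ s ≤ N`,
`z^{(N-s)/2} U_N^{(s)}((√z+1/√z)/2) = 2^s s! ∑_{j=0}^{N-s} C(N-j,s) C(s+j,s) z^j`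
as a Laurent identity in `w = √z`. -/
theorem stmt2 (N s : ℕ) (hs : s ≤ N) (w : ℂ) (hw : w ≠ 0) :
    w ^ (N - s) *
      (Polynomial.derivative^[s] (Polynomial.Chebyshev.U ℂ N)).eval ((w + w⁻¹) / 2) =
      2 ^ s * (Nat.factorial s : ℂ) *
        ∑ j ∈ Finset.range (N - s + 1),
          ((N - j).choose s : ℂ) * ((s + j).choose s : ℂ) * w ^ (2 * j) := by
  have h := main_lemma N s w hw
  show _ = Rhs N s w
  apply mul_left_cancel₀ (pow_ne_zero s hw)
  calc w ^ s * (w ^ (N - s) *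
        (Polynomial.derivative^[s] (Polynomial.Chebyshev.U ℂ N)).eval ((w + w⁻¹) / 2))
      = w ^ N * (Polynomial.derivative^[s] (Polynomial.Chebyshev.U ℂ N)).eval ((w + w⁻¹) / 2) := by
        rw [← mul_assoc, ← pow_add, Nat.add_sub_cancel' hs]
    _ = w ^ s * Rhs N s w := h
end

section
/- For all integers 0 ≤ s ≤ N and all p with 0 ≤ p ≤ N + s + 1, the coefficient of z^p in the polynomial (1 - z)^{2s+1} · Σ_{j=0}^{N-s} [(N-j)!(j+s)!/(j!(N-j-s)!)] z^j equals (-1)^p · s!·s!·(N+s+1)!·(N-p)! / (p!·(N-s)!·(s-p)!·(N+s+1-p)!) when 0 ≤ p ≤ s, equals 0 when s < p < N+1, and the polynomial is antisymmetric (coefficient of z^{N+s+1-p} is the negative of the coefficient of z^p). -/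
open Polynomial Finset

/-!
Up to the factor `s!²`, the coefficient of `z^j` in the sum is `C(s+j, s) C(N-j, s)`.
For `p ≤ N`, expanding `C(N-j, s) = C((N-p) + (p-j), s)` by Vandermonde turns the coefficient
of `z^p` into `∑ᵢ C(N-p, s-i) [z^p] (∑ₖ (-1)^k C(2s+1, k) C(k, i) z^k) (1-z)^{-(s+1)}`, and
that product is the polynomial `(-1)^i C(2s+1, i) z^i (1-z)^{s-i}` of degree `s`. Hence the
coefficient vanishes for `s < p ≤ N`, and for `p ≤ s` the trinomial revision
`C(N-p, s-i) C(s-i, p-i) = C(N-p, s-p) C(N-s, p-i)` and a second Vandermonde sum give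
`(-1)^p C(N-p, s-p) C(N+s+1, p)`. Antisymmetry holds because the sum is palindromic of degree
`N-s` while `(1-z)^{2s+1}` is anti-palindromic.
-/

section

variable {R : Type*} [CommRing R]

theorem Polynomial.coeff_one_sub_X_pow (n k : ℕ) :
    ((1 - X : R[X]) ^ n).coeff k = (-1) ^ k * n.choose k := by
  have h : (1 - X : R[X]) = C (-1) * (X + C (-1)) := by rw [C_neg, C_1]; ring
  rw [h, mul_pow, ← C_pow, coeff_C_mul, coeff_X_add_C_pow]
  rcases le_or_gt k n with hk | hk
  · rw [← mul_assoc, ← pow_add, show n + (n - k) = k + 2 * (n - k) by omega, pow_add, pow_mul]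
    simp
  · simp [Nat.choose_eq_zero_of_lt hk]

theorem Polynomial.natDegree_one_sub_X_pow_le (n : ℕ) : ((1 - X : R[X]) ^ n).natDegree ≤ n :=
  natDegree_le_iff_coeff_eq_zero.mpr fun k hk ↦ by
    rw [coeff_one_sub_X_pow, Nat.choose_eq_zero_of_lt (by exact_mod_cast hk)]; simp

theorem Polynomial.reflect_one_sub_X_pow (n : ℕ) :
    ((1 - X : R[X]) ^ n).reflect n = C ((-1) ^ n) * (1 - X) ^ n := by
  ext k
  rw [coeff_reflect, coeff_C_mul, coeff_one_sub_X_pow, coeff_one_sub_X_pow]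
  rcases le_or_gt k n with hk | hk
  · obtain ⟨d, rfl⟩ := Nat.exists_eq_add_of_le hk
    rw [revAt_le hk, Nat.choose_symm hk, ← mul_assoc, ← pow_add, Nat.add_sub_cancel_left,
      show k + d + k = d + 2 * k by ring, pow_add, pow_mul]
    simp
  · rw [revAt_eq_self_of_lt hk, Nat.choose_eq_zero_of_lt hk]
    simp

theorem Polynomial.coeff_C_mul_X_pow_mul_one_sub_X_pow (c : R) (i m k : ℕ) :
    (C c * X ^ i * (1 - X) ^ m : R[X]).coeff k =
      if i ≤ k then c * ((-1) ^ (k - i) * m.choose (k - i)) else 0 := by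
  rw [mul_assoc, coeff_C_mul, coeff_X_pow_mul', coeff_one_sub_X_pow, mul_ite, mul_zero]

theorem Polynomial.coeff_C_mul_X_pow_mul_one_sub_X_pow_eq_zero (c : R) {i m k : ℕ}
    (h : i + m < k) : (C c * X ^ i * (1 - X) ^ m : R[X]).coeff k = 0 := by
  rw [coeff_C_mul_X_pow_mul_one_sub_X_pow, Nat.choose_eq_zero_of_lt (by omega : m < k - i)]
  simp

theorem Polynomial.coeff_alternating_choose_mul_choose {n i : ℕ} (k : ℕ) :
    (C ((-1 : R) ^ i * n.choose i) * X ^ i * (1 - X) ^ (n - i) : R[X]).coeff k =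
      (-1) ^ k * n.choose k * k.choose i := by
  rw [coeff_C_mul_X_pow_mul_one_sub_X_pow]
  split_ifs with hik
  · rw [mul_assoc _ (n.choose k : R), ← Nat.cast_mul, Nat.choose_mul hik]
    nth_rw 3 [← Nat.add_sub_cancel' hik]
    push_cast; ring
  · simp [Nat.choose_eq_zero_of_lt (not_le.mp hik)]

theorem sum_antidiagonal_alternating_choose_mul_choose_add {n i d : ℕ} (h : i + d + 1 ≤ n)
    (p : ℕ) :
    ∑ x ∈ antidiagonal p, ((-1) ^ x.1 * n.choose x.1 * x.1.choose i * (d + x.2).choose d : R) =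
      (C ((-1 : R) ^ i * n.choose i) * X ^ i * (1 - X) ^ (n - i - (d + 1)) : R[X]).coeff p := by
  have key : ((C ((-1 : R) ^ i * n.choose i) * X ^ i * (1 - X) ^ (n - i) : R[X]) : PowerSeries R) *
      PowerSeries.mk (fun j ↦ ((d + j).choose d : R)) =
      (C ((-1 : R) ^ i * n.choose i) * X ^ i * (1 - X) ^ (n - i - (d + 1)) : R[X]) := by
    obtain ⟨e, rfl⟩ : ∃ e, n = i + e + (d + 1) := ⟨n - i - (d + 1), by omega⟩
    rw [show i + e + (d + 1) - i - (d + 1) = e by omega,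
      show i + e + (d + 1) - i = e + (d + 1) by omega, pow_add, ← mul_assoc]
    push_cast
    rw [mul_assoc _ ((1 - PowerSeries.X) ^ (d + 1)), mul_comm ((1 - PowerSeries.X) ^ (d + 1)),
      PowerSeries.mk_add_choose_mul_one_sub_pow_eq_one, mul_one]
  rw [← Polynomial.coeff_coe, ← key, PowerSeries.coeff_mul]
  simp only [Polynomial.coeff_coe, coeff_alternating_choose_mul_choose, PowerSeries.coeff_mk]

theorem sum_antidiagonal_choose_mul_coeff_of_le {s p : ℕ} (hp : p ≤ s) (a n : ℕ) :
    ∑ x ∈ antidiagonal s, (a.choose x.1 : R) *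
        (C ((-1 : R) ^ x.2 * n.choose x.2) * X ^ x.2 * (1 - X) ^ (s - x.2)).coeff p =
      (-1) ^ p * a.choose (s - p) * (n + (a - (s - p))).choose p := by
  rw [← Nat.sum_antidiagonal_swap]
  simp only [Prod.fst_swap, Prod.snd_swap]
  rw [Nat.sum_antidiagonal_eq_sum_range_succ (fun i j ↦ (a.choose j : R) *
    (C ((-1 : R) ^ i * n.choose i) * X ^ i * (1 - X) ^ (s - i) : R[X]).coeff p)]
  have term : ∀ i ∈ range (s + 1), (a.choose (s - i) : R) *
      (C ((-1 : R) ^ i * n.choose i) * X ^ i * (1 - X) ^ (s - i)).coeff p =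
      if i ≤ p then (-1 : R) ^ p * a.choose (s - p) * (n.choose i * (a - (s - p)).choose (p - i))
      else 0 := by
    intro i hi
    rw [coeff_C_mul_X_pow_mul_one_sub_X_pow]
    split_ifs with hip
    · have : a.choose (s - i) * (s - i).choose (p - i) =
          a.choose (s - p) * (a - (s - p)).choose (p - i) := by
        rw [Nat.choose_symm_of_eq_add (by omega : s - i = (p - i) + (s - p)),
          Nat.choose_mul (by omega), show s - i - (s - p) = p - i by omega]
      have hsign : (-1 : R) ^ p = (-1) ^ i * (-1) ^ (p - i) := by
        rw [← pow_add, Nat.add_sub_cancel' hip]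
      have hcast := congrArg (Nat.cast (R := R)) this
      push_cast at hcast
      rw [hsign]
      linear_combination ((-1 : R) ^ i * (-1) ^ (p - i) * n.choose i) * hcast
    · simp
  have hfilter : (range (s + 1)).filter (· ≤ p) = range (p + 1) := by
    ext i; simp only [mem_filter, mem_range]; omega
  rw [sum_congr rfl term, ← sum_filter, hfilter,
    Nat.add_choose_eq, Nat.sum_antidiagonal_eq_sum_range_succ_mk]
  push_cast
  rw [mul_sum]

noncomputable def chooseProdPoly (R : Type*) [CommRing R] (N s : ℕ) : R[X] :=
  ∑ j ∈ range (N - s + 1), C ((s + j).choose s * (N - j).choose s : R) * X ^ j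

theorem coeff_chooseProdPoly {N s j : ℕ} (hj : j ≤ N) :
    (chooseProdPoly R N s).coeff j = (s + j).choose s * (N - j).choose s := by
  simp only [chooseProdPoly, finsetSum_coeff, coeff_C_mul_X_pow, sum_ite_eq, mem_range]
  split_ifs with hjs
  · rfl
  · rw [Nat.choose_eq_zero_of_lt (by omega : N - j < s)]
    simp

theorem natDegree_chooseProdPoly_le (N s : ℕ) : (chooseProdPoly R N s).natDegree ≤ N - s :=
  natDegree_sum_le_of_forall_le _ _ fun _ hj ↦
    (natDegree_C_mul_X_pow_le _ _).trans (Nat.lt_succ_iff.mp (mem_range.mp hj))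

theorem reflect_chooseProdPoly {N s : ℕ} (hs : s ≤ N) :
    (chooseProdPoly R N s).reflect (N - s) = chooseProdPoly R N s := by
  ext j
  rw [coeff_reflect]
  rcases le_or_gt j (N - s) with hj | hj
  · rw [revAt_le hj, coeff_chooseProdPoly (by omega), coeff_chooseProdPoly (by omega),
      show s + (N - s - j) = N - j by omega, show N - (N - s - j) = s + j by omega, mul_comm]
  · rw [revAt_eq_self_of_lt hj]

theorem coeff_one_sub_X_pow_mul_chooseProdPoly {N s p : ℕ} (hp : p ≤ N) :
    ((1 - X) ^ (2 * s + 1) * chooseProdPoly R N s).coeff p =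
      ∑ x ∈ antidiagonal s, ((N - p).choose x.1 : R) *
        (C ((-1 : R) ^ x.2 * (2 * s + 1).choose x.2) * X ^ x.2 * (1 - X) ^ (s - x.2)).coeff p := by
  have vandermonde : ∀ y ∈ antidiagonal p,
      ((1 - X : R[X]) ^ (2 * s + 1)).coeff y.1 * (chooseProdPoly R N s).coeff y.2 =
        ∑ x ∈ antidiagonal s, ((N - p).choose x.1 : R) *
          ((-1) ^ y.1 * (2 * s + 1).choose y.1 * y.1.choose x.2 * (s + y.2).choose s) := by
    intro y hy
    rw [HasAntidiagonal.mem_antidiagonal] at hy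
    rw [coeff_one_sub_X_pow, coeff_chooseProdPoly (by omega),
      show N - y.2 = (N - p) + y.1 by omega, Nat.add_choose_eq (N - p) y.1 s]
    push_cast
    rw [mul_sum, mul_sum]
    exact sum_congr rfl fun _ _ ↦ by ring
  rw [coeff_mul, sum_congr rfl vandermonde, sum_comm]
  refine sum_congr rfl fun x hx ↦ ?_
  rw [HasAntidiagonal.mem_antidiagonal] at hx
  rw [← mul_sum, sum_antidiagonal_alternating_choose_mul_choose_add (by omega),
    show 2 * s + 1 - x.2 - (s + 1) = s - x.2 by omega]

theorem reflect_one_sub_X_pow_mul_chooseProdPoly {N s : ℕ} (hs : s ≤ N) :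
    ((1 - X) ^ (2 * s + 1) * chooseProdPoly R N s).reflect (N + s + 1) =
      -((1 - X) ^ (2 * s + 1) * chooseProdPoly R N s) := by
  rw [show N + s + 1 = (2 * s + 1) + (N - s) by omega,
    reflect_mul _ _ (natDegree_one_sub_X_pow_le _) (natDegree_chooseProdPoly_le _ _),
    reflect_one_sub_X_pow, reflect_chooseProdPoly hs, Odd.neg_one_pow ⟨s, rfl⟩, C_neg, C_1]
  ring

end

theorem factorial_div_eq_choose_mul_choose {N s j : ℕ} (h : j + s ≤ N) :
    ((N - j).factorial * (j + s).factorial : ℚ) / (j.factorial * (N - j - s).factorial) =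
      s.factorial * s.factorial * ((s + j).choose s * (N - j).choose s) := by
  rw [Nat.cast_choose ℚ (by omega : s ≤ s + j), Nat.cast_choose ℚ (by omega : s ≤ N - j),
    Nat.add_sub_cancel_left, add_comm s j]
  field_simp

/-- Coefficients of `(1-z)^{2s+1} ∑_{j=0}^{N-s} (N-j)!(j+s)!/(j!(N-j-s)!) z^j`:
for `p ≤ s` the coefficient of `z^p` is
`(-1)^p s! s! (N+s+1)! (N-p)! / (p! (N-s)! (s-p)! (N+s+1-p)!)`, for `s < p < N+1`
it vanishes, and the polynomial is antisymmetric. -/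
theorem stmt3 (N s p : ℕ) (hs : s ≤ N) (hp : p ≤ N + s + 1) :
    let Q : Polynomial ℚ :=
      (1 - Polynomial.X) ^ (2 * s + 1) *
        ∑ j ∈ Finset.range (N - s + 1),
          Polynomial.C (((N - j).factorial * (j + s).factorial : ℚ) /
            (j.factorial * (N - j - s).factorial)) * Polynomial.X ^ j
    (p ≤ s →
      Q.coeff p = (-1 : ℚ) ^ p *
        (s.factorial * s.factorial * (N + s + 1).factorial * (N - p).factorial : ℚ) /
          (p.factorial * (N - s).factorial * (s - p).factorial *
            (N + s + 1 - p).factorial)) ∧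
    (s < p → p < N + 1 → Q.coeff p = 0) ∧
    Q.coeff (N + s + 1 - p) = -Q.coeff p := by
  intro Q
  have hsum : ∑ j ∈ range (N - s + 1), C (((N - j).factorial * (j + s).factorial : ℚ) /
      (j.factorial * (N - j - s).factorial)) * X ^ j =
        C (s.factorial * s.factorial : ℚ) * chooseProdPoly ℚ N s := by
    rw [chooseProdPoly, mul_sum]
    refine sum_congr rfl fun j hj ↦ ?_
    rw [factorial_div_eq_choose_mul_choose (by rw [mem_range] at hj; omega), C_mul, mul_assoc]
  have hQ : Q =
      C (s.factorial * s.factorial : ℚ) * ((1 - X) ^ (2 * s + 1) * chooseProdPoly ℚ N s) := by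
    rw [show Q = _ * _ from rfl, hsum, mul_left_comm]
  refine ⟨fun hps ↦ ?_, fun hsp hpN ↦ ?_, ?_⟩
  · rw [hQ, coeff_C_mul, coeff_one_sub_X_pow_mul_chooseProdPoly (by omega),
      sum_antidiagonal_choose_mul_coeff_of_le hps,
      show 2 * s + 1 + (N - p - (s - p)) = N + s + 1 by omega,
      Nat.cast_choose ℚ (by omega : s - p ≤ N - p),
      Nat.cast_choose ℚ (by omega : p ≤ N + s + 1),
      show N - p - (s - p) = N - s by omega]
    field_simp
  · rw [hQ, coeff_C_mul, coeff_one_sub_X_pow_mul_chooseProdPoly (by omega)]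
    refine mul_eq_zero_of_right _ (sum_eq_zero fun x hx ↦ mul_eq_zero_of_right _ ?_)
    rw [HasAntidiagonal.mem_antidiagonal] at hx
    exact coeff_C_mul_X_pow_mul_one_sub_X_pow_eq_zero _ (by omega)
  · rw [← revAt_le hp, ← coeff_reflect, hQ, reflect_C_mul,
      reflect_one_sub_X_pow_mul_chooseProdPoly hs, coeff_C_mul, coeff_C_mul, coeff_neg, mul_neg]
end

section
/- For all integers 0 ≤ s ≤ N, the polynomial identity (1 - z)^{2s+1} Σ_{j=0}^{N-s} (N-j)!(j+s)!/(j!(N-j-s)!) · z^j = [s!·s!·(N+s+1)!/(N-s)!] · Σ_{j=0}^{s} (-1)^j (N-j)! / (j!(s-j)!(N+s+1-j)!) · (z^j - z^{N+s+1-j}) holds. -/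
open Polynomial Finset

open Nat

/-- partial alternating sum of a binomial row -/
lemma pas (m : ℕ) : ∀ r : ℕ, ∑ u ∈ Finset.range (r+1), ((-1:ℚ)^u * ((m+1).choose u)) =
    (-1:ℚ)^r * (m.choose r) := by
  intro r
  induction r with
  | zero => simp
  | succ r ih =>
    rw [Finset.sum_range_succ, ih]
    have h : ((m+1).choose (r+1) : ℚ) = m.choose r + m.choose (r+1) := by
      rw [Nat.choose_succ_succ]; push_cast; ring
    rw [h]; ring

lemma lemG (s : ℕ) : ∀ m r : ℕ,
    ∑ u ∈ Finset.range (r+1), ((-1:ℚ)^u * ((s+1+m).choose u) * ((r-u+s).choose s))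
      = (-1:ℚ)^r * (m.choose r) := by
  induction s with
  | zero =>
    intro m r
    have := pas m r
    simpa [Nat.add_comm 1 m] using this
  | succ s ihs =>
    intro m r
    induction r with
    | zero => simp
    | succ r ihr =>
      have split : ∀ u ∈ Finset.range (r+2),
          ((-1:ℚ)^u * ((s+1+1+m).choose u) * ((r+1-u+(s+1)).choose (s+1)))
          = ((-1:ℚ)^u * ((s+1+(m+1)).choose u) * ((r+1-u+s).choose s))
            + ((-1:ℚ)^u * ((s+1+1+m).choose u) * ((r+1-u+s).choose (s+1))) := by
        intro u _
        have h1 : r+1-u+(s+1) = (r+1-u+s)+1 := by omega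
        have h2 : s+1+1+m = s+1+(m+1) := by omega
        rw [h1, Nat.choose_succ_succ']
        push_cast
        rw [h2]; ring
      rw [Finset.sum_congr rfl split, Finset.sum_add_distrib]
      have hA : ∑ u ∈ Finset.range (r+2),
          ((-1:ℚ)^u * ((s+1+(m+1)).choose u) * ((r+1-u+s).choose s))
          = (-1:ℚ)^(r+1) * ((m+1).choose (r+1)) := ihs (m+1) (r+1)
      have hB : ∑ u ∈ Finset.range (r+2),
          ((-1:ℚ)^u * ((s+1+1+m).choose u) * ((r+1-u+s).choose (s+1)))
          = ∑ u ∈ Finset.range (r+1),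
          ((-1:ℚ)^u * ((s+1+1+m).choose u) * ((r-u+(s+1)).choose (s+1))) := by
        rw [Finset.sum_range_succ]
        have h4 : r+1-(r+1)+s = s := by omega
        rw [h4]
        simp only [Nat.choose_succ_self, Nat.cast_zero, mul_zero, add_zero]
        refine Finset.sum_congr rfl fun u hu => ?_
        have : r+1-u+s = r-u+(s+1) := by
          simp only [Finset.mem_range] at hu; omega
        rw [this]
      rw [hA, hB, ihr]
      have h3 : ((m+1).choose (r+1) : ℚ) = m.choose r + m.choose (r+1) := by
        rw [Nat.choose_succ_succ]; push_cast; ring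
      rw [h3]; ring

/-- trinomial revision: `C(n,a)C(a,c) = C(n,c)C(n-c,a-c)` for `c ≤ a`, `c ≤ n`. -/
lemma tri {n a c : ℕ} (hca : c ≤ a) (hcn : c ≤ n) :
    n.choose a * a.choose c = n.choose c * (n-c).choose (a-c) := by
  rcases le_or_gt a n with han | han
  · have e1 : (n.choose a : ℚ) = n ! / (a ! * (n-a)!) := Nat.cast_choose ℚ han
    have e2 : (a.choose c : ℚ) = a ! / (c ! * (a-c)!) := Nat.cast_choose ℚ hca
    have e3 : (n.choose c : ℚ) = n ! / (c ! * (n-c)!) := Nat.cast_choose ℚ hcn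
    have e4 : ((n-c).choose (a-c) : ℚ) = (n-c)! / ((a-c)! * ((n-c)-(a-c))!) :=
      Nat.cast_choose ℚ (by omega)
    have e5 : (n-c)-(a-c) = n-a := by omega
    have : ((n.choose a * a.choose c : ℕ) : ℚ) = ((n.choose c * (n-c).choose (a-c) : ℕ) : ℚ) := by
      push_cast
      rw [e1, e2, e3, e4, e5]
      have f := fun k : ℕ => Nat.cast_ne_zero (R := ℚ) |>.2 (Nat.factorial_ne_zero k)
      field_simp
    exact_mod_cast this
  · rw [Nat.choose_eq_zero_of_lt han, Nat.zero_mul,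
      Nat.choose_eq_zero_of_lt (by omega : n - c < a - c), Nat.mul_zero]

/-- `C(n,i+u)C(i+u,i) = C(n,i)C(n-i,u)`, unconditionally. -/
lemma tri2 (n i u : ℕ) :
    n.choose (i+u) * (i+u).choose i = n.choose i * (n-i).choose u := by
  rcases le_or_gt (i+u) n with h | h
  · have := tri (n := n) (a := i+u) (c := i) (by omega) (by omega)
    simpa using this
  · rcases le_or_gt i n with hi | hi
    · rw [Nat.choose_eq_zero_of_lt h, Nat.zero_mul,
        Nat.choose_eq_zero_of_lt (by omega : n - i < u), Nat.mul_zero]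
    · rw [Nat.choose_eq_zero_of_lt h, Nat.zero_mul,
        Nat.choose_eq_zero_of_lt hi, Nat.zero_mul]

/-- Vandermonde in range form. -/
lemma vand (m n k : ℕ) : (m+n).choose k = ∑ i ∈ Finset.range (k+1), m.choose i * n.choose (k-i) := by
  rw [Nat.add_choose_eq, Finset.Nat.sum_antidiagonal_eq_sum_range_succ_mk]

/-- inner sum evaluation -/
lemma inner (s k v : ℕ) (hv : v ≤ s) :
    ∑ t ∈ Finset.range (k+1), (-1:ℚ)^t * ((2*s+1).choose t) * (t.choose v) * ((k-t+s).choose s)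
    = if v ≤ k then (-1:ℚ)^k * ((2*s+1).choose v) * ((s-v).choose (k-v)) else 0 := by
  by_cases hvk : v ≤ k
  · rw [if_pos hvk]
    rw [← Finset.sum_range_add_sum_Ico _ (show v ≤ k+1 by omega)]
    have h0 : ∑ t ∈ Finset.range v,
        (-1:ℚ)^t * ((2*s+1).choose t) * (t.choose v) * ((k-t+s).choose s) = 0 := by
      apply Finset.sum_eq_zero
      intro t ht
      simp only [Finset.mem_range] at ht
      rw [Nat.choose_eq_zero_of_lt ht]
      simp
    rw [h0, zero_add, Finset.sum_Ico_eq_sum_range]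
    have hrange : k + 1 - v = (k-v) + 1 := by omega
    rw [hrange]
    have hterm : ∀ u ∈ Finset.range ((k-v)+1),
        (-1:ℚ)^(v+u) * ((2*s+1).choose (v+u)) * ((v+u).choose v) * ((k-(v+u)+s).choose s)
        = ((-1:ℚ)^v * ((2*s+1).choose v)) *
          ((-1:ℚ)^u * ((s+1+(s-v)).choose u) * (((k-v)-u+s).choose s)) := by
      intro u _
      have ht2 : (2*s+1).choose (v+u) * (v+u).choose v = (2*s+1).choose v * ((2*s+1-v)).choose u :=
        tri2 (2*s+1) v u
      have hc : ((2*s+1).choose (v+u) * (v+u).choose v : ℚ)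
          = ((2*s+1).choose v : ℚ) * ((s+1+(s-v)).choose u : ℚ) := by
        have e : 2*s+1-v = s+1+(s-v) := by omega
        rw [← e]; exact_mod_cast congrArg (fun x : ℕ => (x : ℚ)) ht2
      have e2 : k-(v+u) = (k-v)-u := by omega
      rw [pow_add, e2]
      calc (-1:ℚ)^v * (-1:ℚ)^u * ((2*s+1).choose (v+u)) * ((v+u).choose v) * (((k-v)-u+s).choose s)
          = ((-1:ℚ)^v * (-1:ℚ)^u) * ((((2*s+1).choose (v+u)) * ((v+u).choose v)) : ℚ) * (((k-v)-u+s).choose s) := by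
            push_cast; ring
        _ = _ := by rw [hc]; ring
    rw [Finset.sum_congr rfl hterm, ← Finset.mul_sum, lemG s (s-v) (k-v)]
    have hsign : (-1:ℚ)^v * (-1:ℚ)^(k-v) = (-1:ℚ)^k := by
      rw [← pow_add]; congr 1; omega
    calc ((-1:ℚ)^v * ((2*s+1).choose v)) * ((-1:ℚ)^(k-v) * ((s-v).choose (k-v)))
        = ((-1:ℚ)^v * (-1:ℚ)^(k-v)) * ((2*s+1).choose v) * ((s-v).choose (k-v)) := by ring
      _ = _ := by rw [hsign]
  · rw [if_neg hvk]
    apply Finset.sum_eq_zero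
    intro t ht
    simp only [Finset.mem_range] at ht
    rw [Nat.choose_eq_zero_of_lt (by omega : t < v)]
    simp

lemma key (N s k : ℕ) (hs : s ≤ N) (hk : k ≤ N) :
    ∑ j ∈ Finset.range (N-s+1), ((j+s).choose s : ℚ) * ((N-j).choose s) *
      (if j ≤ k then (-1:ℚ)^(k-j) * ((2*s+1).choose (k-j)) else 0)
    = if k ≤ s then (-1:ℚ)^k * ((N+s+1).choose k) * ((N-k).choose (s-k)) else 0 := by
  set f : ℕ → ℚ := fun j => ((j+s).choose s : ℚ) * ((N-j).choose s) *
      (if j ≤ k then (-1:ℚ)^(k-j) * ((2*s+1).choose (k-j)) else 0) with hf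
  have e1 : ∑ j ∈ Finset.range (N-s+1), f j = ∑ j ∈ Finset.range (N+1), f j := by
    apply Finset.sum_subset
    · apply Finset.range_subset_range.2; omega
    · intro j hj hnj
      simp only [Finset.mem_range] at hj hnj
      have h : N - j < s := by omega
      rw [hf]; simp only [Nat.choose_eq_zero_of_lt h]
      simp
  have e2 : ∑ j ∈ Finset.range (N+1), f j = ∑ j ∈ Finset.range (k+1), f j := by
    symm
    apply Finset.sum_subset
    · apply Finset.range_subset_range.2; omega
    · intro j hj hnj
      simp only [Finset.mem_range] at hj hnj
      rw [hf]; simp only [if_neg (by omega : ¬ j ≤ k)]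
      simp
  have e3 : ∑ j ∈ Finset.range (k+1), f j
      = ∑ t ∈ Finset.range (k+1), ((-1:ℚ)^t * ((2*s+1).choose t)) *
          (((k-t+s).choose s : ℚ) * (((N-k)+t).choose s)) := by
    rw [← Finset.sum_range_reflect f (k+1)]
    apply Finset.sum_congr rfl
    intro t ht
    simp only [Finset.mem_range] at ht
    have h1 : k + 1 - 1 - t = k - t := by omega
    have h2 : N - (k-t) = (N-k)+t := by omega
    have h3 : k - (k-t) = t := by omega
    rw [hf, h1]
    simp only [h2, h3, if_pos (by omega : k - t ≤ k)]
    ring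
  have e4 : ∑ t ∈ Finset.range (k+1), ((-1:ℚ)^t * ((2*s+1).choose t)) *
          (((k-t+s).choose s : ℚ) * (((N-k)+t).choose s))
      = ∑ i ∈ Finset.range (s+1), ((N-k).choose i : ℚ) *
          ∑ t ∈ Finset.range (k+1),
            (-1:ℚ)^t * ((2*s+1).choose t) * (t.choose (s-i)) * ((k-t+s).choose s) := by
    have expand : ∀ t ∈ Finset.range (k+1),
        ((-1:ℚ)^t * ((2*s+1).choose t)) * (((k-t+s).choose s : ℚ) * (((N-k)+t).choose s))
        = ∑ i ∈ Finset.range (s+1), ((N-k).choose i : ℚ) *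
            ((-1:ℚ)^t * ((2*s+1).choose t) * (t.choose (s-i)) * ((k-t+s).choose s)) := by
      intro t _
      have hv : (((N-k)+t).choose s : ℚ)
          = ∑ i ∈ Finset.range (s+1), ((N-k).choose i : ℚ) * (t.choose (s-i)) := by
        rw [vand (N-k) t s]
        push_cast
        rfl
      rw [hv, Finset.mul_sum, Finset.mul_sum]
      apply Finset.sum_congr rfl
      intro i _
      ring
    rw [Finset.sum_congr rfl expand, Finset.sum_comm]
    apply Finset.sum_congr rfl
    intro i _
    rw [Finset.mul_sum]
  have e5 : ∑ i ∈ Finset.range (s+1), ((N-k).choose i : ℚ) *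
          ∑ t ∈ Finset.range (k+1),
            (-1:ℚ)^t * ((2*s+1).choose t) * (t.choose (s-i)) * ((k-t+s).choose s)
      = ∑ i ∈ Finset.range (s+1), ((N-k).choose i : ℚ) *
          (if s-i ≤ k then (-1:ℚ)^k * ((2*s+1).choose (s-i)) * ((s-(s-i)).choose (k-(s-i))) else 0) := by
    apply Finset.sum_congr rfl
    intro i hi
    simp only [Finset.mem_range] at hi
    rw [inner s k (s-i) (by omega)]
  rw [e1, e2, e3, e4, e5]
  by_cases hks : k ≤ s
  · rw [if_pos hks]
    have e6 : ∀ i ∈ Finset.range (s+1),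
        ((N-k).choose i : ℚ) *
          (if s-i ≤ k then (-1:ℚ)^k * ((2*s+1).choose (s-i)) * ((s-(s-i)).choose (k-(s-i))) else 0)
        = ((-1:ℚ)^k * ((N-k).choose (s-k))) *
          (if s-k ≤ i then (((2*s+1).choose (s-i) : ℚ) * ((N-s).choose (i-(s-k)))) else 0) := by
      intro i hi
      simp only [Finset.mem_range] at hi
      by_cases hcond : s - k ≤ i
      · rw [if_pos (by omega : s - i ≤ k), if_pos hcond]
        have g1 : s-(s-i) = i := by omega
        have g2 : k-(s-i) = i-(s-k) := by omega
        rw [g1, g2]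
        have g3 : i.choose (i-(s-k)) = i.choose (s-k) := Nat.choose_symm hcond
        have g4 : (N-k).choose i * i.choose (s-k) = (N-k).choose (s-k) * (N-s).choose (i-(s-k)) := by
          have := tri (n := N-k) (a := i) (c := s-k) hcond (by omega)
          have g5 : (N-k)-(s-k) = N-s := by omega
          rwa [g5] at this
        have g6 : ((N-k).choose i : ℚ) * (i.choose (s-k)) = ((N-k).choose (s-k) : ℚ) * ((N-s).choose (i-(s-k))) := by
          exact_mod_cast congrArg (fun x : ℕ => (x : ℚ)) g4
        calc ((N-k).choose i : ℚ) * ((-1:ℚ)^k * ((2*s+1).choose (s-i)) * (i.choose (i-(s-k))))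
            = (-1:ℚ)^k * ((2*s+1).choose (s-i)) * (((N-k).choose i : ℚ) * (i.choose (s-k))) := by
              rw [g3]; ring
          _ = (-1:ℚ)^k * ((2*s+1).choose (s-i)) * (((N-k).choose (s-k) : ℚ) * ((N-s).choose (i-(s-k)))) := by
              rw [g6]
          _ = _ := by ring
      · rw [if_neg (by omega : ¬ s - i ≤ k), if_neg hcond]
        simp
    rw [Finset.sum_congr rfl e6, ← Finset.mul_sum]
    have e7 : ∑ i ∈ Finset.range (s+1),
        (if s-k ≤ i then (((2*s+1).choose (s-i) : ℚ) * ((N-s).choose (i-(s-k)))) else 0)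
        = ((N+s+1).choose k : ℚ) := by
      rw [← Finset.sum_range_add_sum_Ico _ (show s-k ≤ s+1 by omega)]
      have z1 : ∑ i ∈ Finset.range (s-k),
          (if s-k ≤ i then (((2*s+1).choose (s-i) : ℚ) * ((N-s).choose (i-(s-k)))) else 0) = 0 := by
        apply Finset.sum_eq_zero
        intro i hi
        simp only [Finset.mem_range] at hi
        rw [if_neg (by omega)]
      rw [z1, zero_add, Finset.sum_Ico_eq_sum_range]
      have z2 : s + 1 - (s-k) = k+1 := by omega
      rw [z2]
      have z3 : ∀ w ∈ Finset.range (k+1),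
          (if s-k ≤ (s-k)+w then (((2*s+1).choose (s-((s-k)+w)) : ℚ) * ((N-s).choose (((s-k)+w)-(s-k)))) else 0)
          = (((N-s).choose w : ℚ) * ((2*s+1).choose (k-w))) := by
        intro w hw
        simp only [Finset.mem_range] at hw
        rw [if_pos (by omega)]
        have y1 : s-((s-k)+w) = k-w := by omega
        have y2 : ((s-k)+w)-(s-k) = w := by omega
        rw [y1, y2]; ring
      rw [Finset.sum_congr rfl z3]
      have z4 : ((N+s+1).choose k : ℚ) = (((N-s) + (2*s+1)).choose k : ℚ) := by
        congr 2; omega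
      rw [z4, vand (N-s) (2*s+1) k]
      push_cast
      rfl
    rw [e7]
    ring
  · rw [if_neg hks]
    apply Finset.sum_eq_zero
    intro i hi
    simp only [Finset.mem_range] at hi
    rw [if_pos (by omega : s - i ≤ k)]
    have g1 : s-(s-i) = i := by omega
    rw [g1, Nat.choose_eq_zero_of_lt (by omega : i < k-(s-i))]
    simp

lemma neg_one_pow_sub (a b : ℕ) (h : a ≤ b) : (-1:ℚ)^(b-a) = (-1:ℚ)^b * (-1:ℚ)^a := by
  have h1 : (-1:ℚ)^(b-a) * (-1:ℚ)^a = (-1:ℚ)^b := by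
    rw [← pow_add]; congr 1; omega
  have h2 : (-1:ℚ)^a * (-1:ℚ)^a = 1 := by
    rw [← pow_add]
    apply Even.neg_one_pow
    exact ⟨a, by omega⟩
  calc (-1:ℚ)^(b-a) = (-1:ℚ)^(b-a) * ((-1:ℚ)^a * (-1:ℚ)^a) := by rw [h2, mul_one]
    _ = ((-1:ℚ)^(b-a) * (-1:ℚ)^a) * (-1:ℚ)^a := by ring
    _ = (-1:ℚ)^b * (-1:ℚ)^a := by rw [h1]

lemma one_sub_X_pow (n : ℕ) :
    (1 - X : ℚ[X])^n = ∑ i ∈ Finset.range (n+1), Polynomial.C ((-1:ℚ)^i * (n.choose i)) * X^i := by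
  have h : (1 - X : ℚ[X]) = -X + 1 := by ring
  rw [h, add_pow]
  apply Finset.sum_congr rfl
  intro i _
  rw [one_pow, mul_one, neg_pow]
  rw [show ((-1 : ℚ[X])) = Polynomial.C (-1 : ℚ) by simp, ← Polynomial.C_pow,
    show ((n.choose i : ℚ[X])) = Polynomial.C ((n.choose i : ℚ)) by simp]
  rw [mul_comm (Polynomial.C ((-1:ℚ)^i)) (X^i : ℚ[X]), mul_assoc, ← Polynomial.C_mul]
  ring

lemma coeff_one_sub_pow (n m : ℕ) :
    ((1 - X : ℚ[X])^n).coeff m = (-1:ℚ)^m * (n.choose m) := by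
  rw [one_sub_X_pow, Polynomial.finset_sum_coeff]
  simp only [Polynomial.coeff_C_mul, Polynomial.coeff_X_pow]
  have step : ∀ i ∈ Finset.range (n+1),
      ((-1:ℚ)^i * (n.choose i) * if i = m then (1:ℚ) else 0)
      = if i = m then (-1:ℚ)^i * (n.choose i) else 0 := by
    intro i _
    rw [mul_ite, mul_one, mul_zero]
  have step2 : ∀ i ∈ Finset.range (n+1),
      ((-1:ℚ)^i * (n.choose i) * if m = i then (1:ℚ) else 0)
      = if i = m then (-1:ℚ)^i * (n.choose i) else 0 := by
    intro i hi
    rw [show (if m = i then (1:ℚ) else 0) = if i = m then (1:ℚ) else 0 from if_congr eq_comm rfl rfl]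
    exact step i hi
  rw [Finset.sum_congr rfl step2,
    Finset.sum_ite_eq' (Finset.range (n+1)) m (fun i => (-1:ℚ)^i * (n.choose i))]
  by_cases hm : m ∈ Finset.range (n+1)
  · rw [if_pos hm]
  · rw [if_neg hm]
    simp only [Finset.mem_range] at hm
    rw [Nat.choose_eq_zero_of_lt (by omega)]
    simp

lemma core (N s : ℕ) (hs : s ≤ N) :
    (1 - X : ℚ[X]) ^ (2*s+1) *
      ∑ j ∈ Finset.range (N-s+1), Polynomial.C (((j+s).choose s : ℚ) * ((N-j).choose s)) * X^j
    = ∑ j ∈ Finset.range (s+1),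
        Polynomial.C ((-1:ℚ)^j * ((N+s+1).choose j) * ((N-j).choose (s-j))) * (X^j - X^(N+s+1-j)) := by
  apply Polynomial.ext
  intro k
  have hL : ((1 - X : ℚ[X]) ^ (2*s+1) *
      ∑ j ∈ Finset.range (N-s+1), Polynomial.C (((j+s).choose s : ℚ) * ((N-j).choose s)) * X^j).coeff k
      = ∑ j ∈ Finset.range (N-s+1), ((j+s).choose s : ℚ) * ((N-j).choose s) *
          (if j ≤ k then (-1:ℚ)^(k-j) * ((2*s+1).choose (k-j)) else 0) := by
    rw [Finset.mul_sum, Polynomial.finset_sum_coeff]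
    apply Finset.sum_congr rfl
    intro j _
    rw [mul_left_comm, Polynomial.coeff_C_mul, Polynomial.coeff_mul_X_pow',
      coeff_one_sub_pow (2*s+1) (k-j)]
  have hR : (∑ j ∈ Finset.range (s+1),
        Polynomial.C ((-1:ℚ)^j * ((N+s+1).choose j) * ((N-j).choose (s-j))) * (X^j - X^(N+s+1-j))).coeff k
      = ∑ j ∈ Finset.range (s+1), ((-1:ℚ)^j * ((N+s+1).choose j) * ((N-j).choose (s-j))) *
          ((if k = j then (1:ℚ) else 0) - (if k = N+s+1-j then (1:ℚ) else 0)) := by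
    rw [Polynomial.finset_sum_coeff]
    apply Finset.sum_congr rfl
    intro j _
    rw [Polynomial.coeff_C_mul, Polynomial.coeff_sub, Polynomial.coeff_X_pow, Polynomial.coeff_X_pow]
  rw [hL, hR]
  by_cases hk : k ≤ N
  · rw [key N s k hs hk]
    have step : ∀ j ∈ Finset.range (s+1),
        ((-1:ℚ)^j * ((N+s+1).choose j) * ((N-j).choose (s-j))) *
          ((if k = j then (1:ℚ) else 0) - (if k = N+s+1-j then (1:ℚ) else 0))
        = if j = k then ((-1:ℚ)^j * ((N+s+1).choose j) * ((N-j).choose (s-j))) else 0 := by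
      intro j hj
      simp only [Finset.mem_range] at hj
      rw [if_neg (by omega : ¬ k = N+s+1-j)]
      by_cases hjk : j = k
      · rw [if_pos (by omega : k = j), if_pos hjk]; ring
      · rw [if_neg (by omega : ¬ k = j), if_neg hjk]; ring
    rw [Finset.sum_congr rfl step,
      Finset.sum_ite_eq' (Finset.range (s+1)) k
        (fun j => ((-1:ℚ)^j * ((N+s+1).choose j) * ((N-j).choose (s-j))))]
    by_cases hks : k ≤ s
    · rw [if_pos hks, if_pos (by simp only [Finset.mem_range]; omega : k ∈ Finset.range (s+1))]
    · rw [if_neg hks, if_neg (by simp only [Finset.mem_range]; omega : ¬ k ∈ Finset.range (s+1))]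
  · by_cases hk2 : k ≤ N+s+1
    · -- N < k ≤ N+s+1 : reflection
      have hk1 : N+s+1-k ≤ s := by omega
      have hk3 : N+s+1-k ≤ N := by omega
      have stepR : ∀ j ∈ Finset.range (s+1),
          ((-1:ℚ)^j * ((N+s+1).choose j) * ((N-j).choose (s-j))) *
            ((if k = j then (1:ℚ) else 0) - (if k = N+s+1-j then (1:ℚ) else 0))
          = if j = N+s+1-k then -((-1:ℚ)^j * ((N+s+1).choose j) * ((N-j).choose (s-j))) else 0 := by
        intro j hj
        simp only [Finset.mem_range] at hj
        rw [if_neg (by omega : ¬ k = j)]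
        by_cases hjk : j = N+s+1-k
        · rw [if_pos (by omega : k = N+s+1-j), if_pos hjk]; ring
        · rw [if_neg (by omega : ¬ k = N+s+1-j), if_neg hjk]; ring
      rw [Finset.sum_congr rfl stepR,
        Finset.sum_ite_eq' (Finset.range (s+1)) (N+s+1-k)
          (fun j => -((-1:ℚ)^j * ((N+s+1).choose j) * ((N-j).choose (s-j)))),
        if_pos (by simp only [Finset.mem_range]; omega : N+s+1-k ∈ Finset.range (s+1))]
      rw [← Finset.sum_range_reflect]
      have stepL : ∀ j ∈ Finset.range (N-s+1),
          (((N-s+1-1-j)+s).choose s : ℚ) * ((N-(N-s+1-1-j)).choose s) *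
            (if N-s+1-1-j ≤ k then (-1:ℚ)^(k-(N-s+1-1-j)) * ((2*s+1).choose (k-(N-s+1-1-j))) else 0)
          = -(((j+s).choose s : ℚ) * ((N-j).choose s) *
              (if j ≤ N+s+1-k then (-1:ℚ)^((N+s+1-k)-j) * ((2*s+1).choose ((N+s+1-k)-j)) else 0)) := by
        intro j hj
        simp only [Finset.mem_range] at hj
        have r1 : N-s+1-1-j = N-s-j := by omega
        have r2 : (N-s-j)+s = N-j := by omega
        have r3 : N-(N-s-j) = j+s := by omega
        rw [r1, r2, r3, if_pos (by omega : N-s-j ≤ k)]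
        by_cases hjk : j ≤ N+s+1-k
        · rw [if_pos hjk]
          have e1 : k-(N-s-j) = 2*s+1-((N+s+1-k)-j) := by omega
          have e2 : (N+s+1-k)-j ≤ 2*s+1 := by omega
          rw [e1, Nat.choose_symm e2, neg_one_pow_sub _ _ e2]
          have e3 : (-1:ℚ)^(2*s+1) = -1 := Odd.neg_one_pow ⟨s, by ring⟩
          rw [e3]
          ring
        · rw [if_neg hjk]
          rw [Nat.choose_eq_zero_of_lt (by omega : 2*s+1 < k-(N-s-j))]
          ring
      rw [Finset.sum_congr rfl stepL, Finset.sum_neg_distrib, key N s (N+s+1-k) hs hk3,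
        if_pos hk1]
    · -- k > N+s+1 : both sides zero
      have hL0 : ∑ j ∈ Finset.range (N-s+1), ((j+s).choose s : ℚ) * ((N-j).choose s) *
          (if j ≤ k then (-1:ℚ)^(k-j) * ((2*s+1).choose (k-j)) else 0) = 0 := by
        apply Finset.sum_eq_zero
        intro j hj
        simp only [Finset.mem_range] at hj
        rw [if_pos (by omega : j ≤ k), Nat.choose_eq_zero_of_lt (by omega : 2*s+1 < k-j)]
        simp
      have hR0 : ∑ j ∈ Finset.range (s+1), ((-1:ℚ)^j * ((N+s+1).choose j) * ((N-j).choose (s-j))) *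
          ((if k = j then (1:ℚ) else 0) - (if k = N+s+1-j then (1:ℚ) else 0)) = 0 := by
        apply Finset.sum_eq_zero
        intro j hj
        simp only [Finset.mem_range] at hj
        rw [if_neg (by omega : ¬ k = j), if_neg (by omega : ¬ k = N+s+1-j)]
        simp
      rw [hL0, hR0]


/-- `(1-z)^{2s+1} ∑_{j=0}^{N-s} (N-j)!(j+s)!/(j!(N-j-s)!) z^j
  = (s! s! (N+s+1)!/(N-s)!) ∑_{j=0}^{s} (-1)^j (N-j)!/(j!(s-j)!(N+s+1-j)!)
      (z^j - z^{N+s+1-j})` in `ℚ[z]`. -/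
theorem stmt4 (N s : ℕ) (hs : s ≤ N) :
    (1 - Polynomial.X : Polynomial ℚ) ^ (2 * s + 1) *
        ∑ j ∈ Finset.range (N - s + 1),
          Polynomial.C (((N - j).factorial * (j + s).factorial : ℚ) /
            (j.factorial * (N - j - s).factorial)) * Polynomial.X ^ j =
      Polynomial.C ((s.factorial * s.factorial * (N + s + 1).factorial : ℚ) /
          (N - s).factorial) *
        ∑ j ∈ Finset.range (s + 1),
          Polynomial.C ((-1 : ℚ) ^ j * ((N - j).factorial : ℚ) /
            (j.factorial * (s - j).factorial * (N + s + 1 - j).factorial)) *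
            (Polynomial.X ^ j - Polynomial.X ^ (N + s + 1 - j)) := by
  have nz : ∀ m : ℕ, ((m.factorial : ℚ)) ≠ 0 := fun m => Nat.cast_ne_zero.2 (Nat.factorial_ne_zero m)
  have hL : ∀ j ∈ Finset.range (N-s+1),
      Polynomial.C (((N - j).factorial * (j + s).factorial : ℚ) /
            (j.factorial * (N - j - s).factorial)) * (X : ℚ[X]) ^ j
      = Polynomial.C ((s.factorial * s.factorial : ℚ)) *
          (Polynomial.C (((j+s).choose s : ℚ) * ((N-j).choose s)) * X^j) := by
    intro j hj
    simp only [Finset.mem_range] at hj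
    rw [← mul_assoc, ← Polynomial.C_mul]
    congr 2
    have f1 : ((j+s).factorial : ℚ) = ((j+s).choose s : ℚ) * s.factorial * j.factorial := by
      have h := Nat.choose_mul_factorial_mul_factorial (show s ≤ j+s by omega)
      rw [Nat.add_sub_cancel] at h
      exact_mod_cast h.symm
    have f2 : ((N-j).factorial : ℚ) = ((N-j).choose s : ℚ) * s.factorial * (N-j-s).factorial := by
      have h2 : s ≤ N-j := by omega
      have h := Nat.choose_mul_factorial_mul_factorial h2
      exact_mod_cast h.symm
    rw [f1, f2]
    field_simp
  have hR : ∀ j ∈ Finset.range (s+1),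
      Polynomial.C ((s.factorial * s.factorial * (N + s + 1).factorial : ℚ) /
          (N - s).factorial) *
        (Polynomial.C ((-1 : ℚ) ^ j * ((N - j).factorial : ℚ) /
            (j.factorial * (s - j).factorial * (N + s + 1 - j).factorial)) *
          ((X : ℚ[X]) ^ j - X ^ (N + s + 1 - j)))
      = Polynomial.C ((s.factorial * s.factorial : ℚ)) *
          (Polynomial.C ((-1:ℚ)^j * ((N+s+1).choose j) * ((N-j).choose (s-j))) *
            (X ^ j - X ^ (N+s+1-j))) := by
    intro j hj
    simp only [Finset.mem_range] at hj
    rw [← mul_assoc, ← Polynomial.C_mul, ← mul_assoc, ← Polynomial.C_mul]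
    congr 2
    have f1 : ((N+s+1).factorial : ℚ)
        = ((N+s+1).choose j : ℚ) * j.factorial * (N+s+1-j).factorial := by
      have h := Nat.choose_mul_factorial_mul_factorial (show j ≤ N+s+1 by omega)
      exact_mod_cast h.symm
    have f2 : ((N-j).factorial : ℚ)
        = ((N-j).choose (s-j) : ℚ) * (s-j).factorial * (N-s).factorial := by
      have h2 : s-j ≤ N-j := by omega
      have h := Nat.choose_mul_factorial_mul_factorial h2
      have h3 : (N-j)-(s-j) = N-s := by omega
      rw [h3] at h
      exact_mod_cast h.symm
    rw [f1, f2]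
    field_simp
  rw [Finset.sum_congr rfl hL, ← Finset.mul_sum]
  conv_rhs => rw [Finset.mul_sum, Finset.sum_congr rfl hR, ← Finset.mul_sum]
  rw [mul_left_comm]
  exact congrArg _ (core N s hs)
end

section
/- For any integer N ≥ 2, the polynomial 1 − z^{N+2} − ((N+2)/N)(z − z^{N+1}) factors as (1−z)³ · ∏_{j=1}^{⌊(N−1)/2⌋}[z² + 1 + 2z(1 − 2ν_j²)] · (1+z if N even, else 1), where {ν_j} is the set of positive real zeros of U_N'. -/
/-!
Put `z = w²` and `x = (w + w⁻¹) / 2`. Then `z² + 1 + 2z(1 - 2ν²) = (2w)² (x² - ν²)` and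
`1 + z = 2w x`, so at `z` the right-hand side is `(1 - z)³ (2w)^(N-1) U_N'(x) / (N 2^N)`:
the `ν_j`, the `-ν_j` (`U_N'` has the parity of `N - 1`) and, for `N` even, `0` are `N - 1`
distinct roots of `U_N'`, whose degree is `N - 1` and leading coefficient `N 2^N`.
On the other hand `(N + 1) T_{N+1} = X U_N - (1 - X²) U_N'`, together with
`T_n(x) = (wⁿ + w⁻ⁿ) / 2` and `(w - w⁻¹) U_n(x) = w^(n+1) - w^-(n+1)`, turns
`(1 - z)³ (2w)^(N-1) U_N'(x)` into `N 2^N` times the left-hand side at `z`.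
So both polynomials agree at every `z > 0`.
-/

open Polynomial Finset

namespace Polynomial

theorem eq_C_leadingCoeff_mul_prod_X_sub_C_of_injective {R ι : Type*} [CommRing R]
    [IsDomain R] [Fintype ι] {p : R[X]} {f : ι → R} (hf : Function.Injective f)
    (hroot : ∀ i, p.IsRoot (f i)) (hdeg : p.natDegree ≤ Fintype.card ι) :
    p = C p.leadingCoeff * ∏ i, (X - C (f i)) := by
  rcases eq_or_ne p 0 with rfl | hp
  · rw [leadingCoeff_zero, C_0, zero_mul]
  refine eq_leadingCoeff_mul_of_monic_of_dvd_of_natDegree_le (monic_prod_X_sub_C _ _) ?_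
    (by simpa using hdeg)
  have hle : univ.val.map f ≤ p.roots :=
    (Multiset.le_iff_subset (univ.nodup.map hf)).2 fun a ha => by
      obtain ⟨i, -, rfl⟩ := Multiset.mem_map.1 ha
      exact (mem_roots hp).2 (hroot i)
  have hprod : ∏ i, (X - C (f i)) = ((univ.val.map f).map fun a => X - C a).prod := by
    rw [Multiset.map_map]; rfl
  exact hprod ▸ (Multiset.prod_X_sub_C_dvd_iff_le_roots hp _).2 hle

namespace Chebyshev

section Parity

variable (R : Type*) [CommRing R]

theorem U_comp_neg_X (n : ℕ) : (U R n).comp (-X) = (-1) ^ n * U R n := by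
  have h := U_eval_neg (R := R[X]) n X
  rwa [← map_U (Polynomial.C : R →+* R[X]), eval_map, eval_map, eval₂_C_X,
    Int.cast_negOnePow_natCast] at h

theorem derivative_U_comp_neg_X (n : ℕ) :
    (derivative (U R n)).comp (-X) = -(-1) ^ n * derivative (U R n) := by
  have h := congrArg derivative (U_comp_neg_X R n)
  have h0 : derivative ((-1 : R[X]) ^ n) = 0 := by simp [derivative_pow]
  rw [derivative_comp, derivative_neg, derivative_X, derivative_mul, h0] at h
  linear_combination -h

end Parity

section HalfAddInv

variable {K : Type*} [Field K] [CharZero K] {w : K}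

theorem T_eval_half_add_inv (hw : w ≠ 0) (n : ℕ) :
    (T K n).eval ((w + w⁻¹) / 2) = (w ^ n + w⁻¹ ^ n) / 2 := by
  have hv : w * w⁻¹ = 1 := mul_inv_cancel₀ hw
  induction n using Nat.twoStepInduction with
  | zero => simp
  | one => simp
  | more n ih1 ih2 =>
    push_cast at ih2 ⊢
    rw [T_add_two]
    simp only [eval_sub, eval_mul, eval_ofNat, eval_X, ih1, ih2]
    linear_combination (w ^ n + w⁻¹ ^ n) / 2 * hv

theorem sub_inv_mul_U_eval_half_add_inv (hw : w ≠ 0) (n : ℕ) :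
    (w - w⁻¹) * (U K n).eval ((w + w⁻¹) / 2) = w ^ (n + 1) - w⁻¹ ^ (n + 1) := by
  have hv : w * w⁻¹ = 1 := mul_inv_cancel₀ hw
  induction n using Nat.twoStepInduction with
  | zero => simp
  | one =>
    simp only [Nat.cast_one, U_one, eval_mul, eval_ofNat, eval_X]
    ring
  | more n ih1 ih2 =>
    push_cast at ih2 ⊢
    rw [U_add_two]
    simp only [eval_sub, eval_mul, eval_ofNat, eval_X]
    linear_combination (w + w⁻¹) * ih2 - ih1 + (w ^ (n + 1) - w⁻¹ ^ (n + 1)) * hv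

theorem sub_inv_pow_three_mul_derivative_U_eval_half_add_inv (hw : w ≠ 0) (n : ℕ) :
    (w - w⁻¹) ^ 3 * (derivative (U K n)).eval ((w + w⁻¹) / 2) =
      2 * (n * (w ^ (n + 2) - w⁻¹ ^ (n + 2)) - (n + 2) * (w ^ n - w⁻¹ ^ n)) := by
  have hv : w * w⁻¹ = 1 := mul_inv_cancel₀ hw
  have h := congrArg (eval ((w + w⁻¹) / 2)) (add_one_mul_T_eq_poly_in_U (R := K) n)
  rw [show (n : ℤ) + 1 = (n + 1 : ℕ) by push_cast; rfl] at h
  simp only [eval_mul, eval_add, eval_sub, eval_pow, Int.cast_natCast, eval_natCast, eval_one,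
    eval_X, T_eval_half_add_inv hw] at h
  have hU := sub_inv_mul_U_eval_half_add_inv hw n
  linear_combination -4 * (w - w⁻¹) * h - 2 * (w + w⁻¹) * hU +
    (2 * (n + 2) * (w⁻¹ ^ n - w ^ n) -
      4 * (w - w⁻¹) * (derivative (U K n)).eval ((w + w⁻¹) / 2)) * hv

end HalfAddInv

end Chebyshev

end Polynomial

theorem derivative_U_eq_C_mul_prod {N : ℕ} {ν : Fin ((N - 1) / 2) → ℝ}
    (hinj : Function.Injective ν) (hpos : ∀ j, 0 < ν j)
    (hroot : ∀ j, (derivative (Chebyshev.U ℝ N)).IsRoot (ν j)) :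
    derivative (Chebyshev.U ℝ N) =
      C ((N : ℝ) * 2 ^ N) * (∏ j, (X ^ 2 - C (ν j ^ 2))) * X ^ ((N - 1) % 2) := by
  set p := derivative (Chebyshev.U ℝ N)
  have hroot_neg (x : ℝ) (hx : p.IsRoot x) : p.IsRoot (-x) := by
    have h := congrArg (eval x) (Chebyshev.derivative_U_comp_neg_X ℝ N)
    rwa [eval_comp, eval_neg, eval_X, eval_mul, hx.eq_zero, mul_zero] at h
  have hroot_zero (he : (N - 1) % 2 = 1) : p.IsRoot 0 := by
    have h := Chebyshev.derivative_U_comp_neg_X ℝ N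
    rw [Even.neg_one_pow (Nat.even_iff.2 (by omega)), neg_one_mul] at h
    have h0 := congrArg (eval 0) h
    rw [eval_comp, eval_neg, eval_X, neg_zero, eval_neg] at h0
    exact self_eq_neg.1 h0
  -- `Fin ((N - 1) % 2)` is nonempty exactly when `N` is even; it indexes the root `0`.
  let f : Fin ((N - 1) / 2) ⊕ (Fin ((N - 1) / 2) ⊕ Fin ((N - 1) % 2)) → ℝ :=
    Sum.elim ν (Sum.elim (fun j => -ν j) fun _ => 0)
  have hf : Function.Injective f := by
    refine hinj.sumElim ((neg_injective.comp hinj).sumElim (fun a b _ => Fin.ext (by omega))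
      fun j _ => (neg_neg_of_pos (hpos j)).ne) ?_
    rintro j (k | k)
    · exact fun h => by rw [Sum.elim_inl] at h; linarith [hpos j, hpos k]
    · exact (hpos j).ne'
  have hf_root : ∀ i, p.IsRoot (f i) := by
    rintro (j | j | k)
    · exact hroot j
    · exact hroot_neg _ (hroot j)
    · exact hroot_zero (by have := k.isLt; omega)
  have hdeg : p.natDegree ≤
      Fintype.card (Fin ((N - 1) / 2) ⊕ (Fin ((N - 1) / 2) ⊕ Fin ((N - 1) % 2))) := by
    simp only [natDegree_derivative, Chebyshev.natDegree_U_natCast, Fintype.card_sum,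
      Fintype.card_fin, p]
    omega
  rw [eq_C_leadingCoeff_mul_prod_X_sub_C_of_injective hf hf_root hdeg]
  simp only [leadingCoeff_derivative, Chebyshev.leadingCoeff_U_natCast,
    Chebyshev.natDegree_U_natCast, Fintype.prod_sum_type, f, Sum.elim_inl, Sum.elim_inr, C_neg,
    C_0, sub_neg_eq_add, sub_zero, prod_const, card_univ, Fintype.card_fin, C_mul, C_pow, p]
  simp_rw [sq_sub_sq, prod_mul_distrib]
  ring

section EvalSq

variable {K : Type*} [Field K] [CharZero K] {w : K}

theorem eval_sq_mul_eq_derivative_U_eval_half_add_inv {N : ℕ} (hN : N ≠ 0) (hw : w ≠ 0) :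
    (1 - X ^ (N + 2) - C (((N : K) + 2) / N) * (X - X ^ (N + 1))).eval (w ^ 2) * (N * 2 ^ N) =
      (1 - w ^ 2) ^ 3 * (2 * w) ^ (N - 1) *
        (derivative (Chebyshev.U K N)).eval ((w + w⁻¹) / 2) := by
  obtain ⟨n, rfl⟩ : ∃ n, N = n + 1 := ⟨N - 1, by omega⟩
  have hD := Chebyshev.sub_inv_pow_three_mul_derivative_U_eval_half_add_inv hw (n + 1)
  have hc : ((n + 1 : ℕ) + 2 : K) / (n + 1 : ℕ) * (n + 1 : ℕ) = (n + 1 : ℕ) + 2 :=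
    div_mul_cancel₀ _ (Nat.cast_ne_zero.2 hN)
  have hv (k : ℕ) : w ^ k * w⁻¹ ^ k = 1 := by rw [← mul_pow, mul_inv_cancel₀ hw, one_pow]
  have h1 : 1 - w ^ 2 = -w * (w - w⁻¹) := by linear_combination -hv 1
  simp only [eval_sub, eval_one, eval_pow, eval_mul, eval_C, eval_X, Nat.add_sub_cancel, h1]
  push_cast at hc hD ⊢
  linear_combination (2 : K) ^ n * w ^ (n + 3) * hD
    - 2 ^ (n + 1) * (w ^ 2 - w ^ (2 * n + 4)) * hc
    - 2 ^ (n + 1) * (n + 1) * hv (n + 3) + 2 ^ (n + 1) * (n + 3) * w ^ 2 * hv (n + 1)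

theorem eval_sq_prod_mul_eq_eval_half_add_inv {ι : Type*} [Fintype ι] (hw : w ≠ 0)
    (ν : ι → K) (c : K) {n e : ℕ} (hn : n = 2 * Fintype.card ι + e) :
    ((1 - X) ^ 3 * (∏ j, (X ^ 2 + 1 + C (2 * (1 - 2 * ν j ^ 2)) * X)) * (1 + X) ^ e).eval
        (w ^ 2) * c =
      (1 - w ^ 2) ^ 3 * (2 * w) ^ n *
        (C c * (∏ j, (X ^ 2 - C (ν j ^ 2))) * X ^ e).eval ((w + w⁻¹) / 2) := by
  have hv : w * w⁻¹ = 1 := mul_inv_cancel₀ hw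
  have hquad (a : K) : (w ^ 2) ^ 2 + 1 + 2 * (1 - 2 * a ^ 2) * w ^ 2 =
      (2 * w) ^ 2 * (((w + w⁻¹) / 2) ^ 2 - a ^ 2) := by
    linear_combination -(1 + w * w⁻¹ + 2 * w ^ 2) * hv
  have hlin : 1 + w ^ 2 = 2 * w * ((w + w⁻¹) / 2) := by linear_combination -hv
  simp only [eval_mul, eval_pow, eval_sub, eval_add, eval_one, eval_X, eval_C, eval_prod, hquad,
    hlin, mul_pow, prod_mul_distrib, prod_const, card_univ, hn, pow_add, pow_mul]
  ring

end EvalSq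

/-- `1 - z^{N+2} - ((N+2)/N)(z - z^{N+1}) = (1-z)³ ∏_j [z²+1+2z(1-2ν_j²)] · (1+z if N even)`,
where the `ν_j` enumerate the positive zeros of `U_N'`. -/
theorem stmt6 (N : ℕ) (hN : 2 ≤ N) (ν : Fin ((N - 1) / 2) → ℝ)
    (hinj : Function.Injective ν)
    (hν : ∀ x : ℝ,
      (0 < x ∧ (Polynomial.derivative (Polynomial.Chebyshev.U ℝ N)).eval x = 0) ↔
        ∃ j, ν j = x) :
    (1 - Polynomial.X ^ (N + 2) -
        Polynomial.C (((N : ℝ) + 2) / N) * (Polynomial.X - Polynomial.X ^ (N + 1)) :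
        Polynomial ℝ) =
      (1 - Polynomial.X) ^ 3 *
        (∏ j : Fin ((N - 1) / 2),
          (Polynomial.X ^ 2 + 1 + Polynomial.C (2 * (1 - 2 * (ν j) ^ 2)) * Polynomial.X)) *
        (if Even N then 1 + Polynomial.X else 1) := by
  have hfac := derivative_U_eq_C_mul_prod hinj (fun j => ((hν (ν j)).2 ⟨j, rfl⟩).1)
    fun j => ((hν (ν j)).2 ⟨j, rfl⟩).2
  have hpar : (if Even N then (1 + X : ℝ[X]) else 1) = (1 + X) ^ ((N - 1) % 2) := by
    rcases Nat.even_or_odd N with h | h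
    · rw [if_pos h, show (N - 1) % 2 = 1 by rcases h with ⟨k, rfl⟩; omega, pow_one]
    · rw [if_neg (Nat.not_even_iff_odd.2 h),
        show (N - 1) % 2 = 0 by rcases h with ⟨k, rfl⟩; omega, pow_zero]
  rw [hpar]
  refine eq_of_infinite_eval_eq _ _ ((Set.Ioi_infinite 0).mono fun z (hz : 0 < z) => ?_)
  obtain ⟨w, hw, rfl⟩ : ∃ w : ℝ, w ≠ 0 ∧ w ^ 2 = z :=
    ⟨√z, (Real.sqrt_pos.2 hz).ne', Real.sq_sqrt hz.le⟩
  refine mul_right_cancel₀ (b := (N : ℝ) * 2 ^ N) (by positivity) ?_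
  rw [eval_sq_mul_eq_derivative_U_eval_half_add_inv (by omega) hw, hfac,
    eval_sq_prod_mul_eq_eval_half_add_inv hw ν _ (n := N - 1) (by simp; omega)]
end

section
/- Let P(z) = Σ_{j=0}^{s} (-1)^j γ_j (z^j − z^{N+s+1−j}) with γ_0 = 1, real γ_j, and 0 ≤ s ≤ N. If Σ_{j=1}^{s} |γ_j| ≤ 1, then every complex zero of P lies on the unit circle. -/
/-!
For `∑_{j ≥ 1} |c_j| < 1` the polynomial `P_c(z) = ∑_{j ≤ s} (-1)^j c_j (z^j - z^(K-j))` of degree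
`K > s` satisfies `P_c(e^{iθ}) = -2i e^{iKθ/2} g(θ)` with `g` real. At `θ_l = (2l+1)π/K` the `j = 0`
term of `g` equals `(-1)^l` and dominates the others, so `g` vanishes in each `(θ_l, θ_{l+1})`.
The `K` zeros found for `l < K` lie in an arc of length `2π`, hence give `K` distinct roots of
`P_c` on the unit circle: all of them. Consequently `||z| - 1|^K ≤ |P_c(z)|` for every `z`.

In the boundary case `∑ |γ_j| ≤ 1`, take `c = (1, tγ_1, …, tγ_s)` with `0 ≤ t < 1`: at a zero `z`
of `P_γ` we get `P_c(z) = (1 - t)(1 - z^K)`, and letting `t → 1` forces `|z| = 1`.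
-/

open Finset Polynomial Filter Topology
open scoped Real
open Complex (exp I)

lemma norm_multiset_prod_map {α 𝕜 : Type*} [NormedField 𝕜] (m : Multiset α) (f : α → 𝕜) :
    ‖(m.map f).prod‖ = (m.map (‖f ·‖)).prod := by
  rw [← normHom_apply, map_multiset_prod, Multiset.map_map]
  rfl

lemma abs_norm_sub_one_pow_le_norm_eval {p : ℂ[X]} (hp : ∀ w ∈ p.roots, ‖w‖ = 1) (z : ℂ) :
    ‖p.leadingCoeff‖ * |‖z‖ - 1| ^ p.natDegree ≤ ‖p.eval z‖ := by
  rw [(IsAlgClosed.splits p).eval_eq_prod_roots, norm_mul, norm_multiset_prod_map,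
    ← IsAlgClosed.card_roots_eq_natDegree, ← Multiset.prod_replicate, ← Multiset.map_const']
  gcongr
  refine Multiset.prod_map_le_prod_map₀ _ _ (fun _ _ ↦ abs_nonneg _) fun w hw ↦ ?_
  simpa only [hp w hw] using abs_norm_sub_norm_le z w

lemma exists_mem_Ioo_eq_zero_of_mul_neg {f : ℝ → ℝ} (hf : Continuous f) {a b : ℝ} (hab : a ≤ b)
    (h : f a * f b < 0) : ∃ x ∈ Set.Ioo a b, f x = 0 := by
  rcases lt_or_gt_of_ne (left_ne_zero_of_mul h.ne) with ha | ha
  · exact intermediate_value_Ioo hab hf.continuousOn ⟨ha, by nlinarith⟩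
  · exact intermediate_value_Ioo' hab hf.continuousOn ⟨by nlinarith, ha⟩

lemma norm_eq_one_of_mem_roots_of_isRoot_exp {p : ℂ[X]} (hp : p ≠ 0) {φ : ℕ → ℝ}
    (hφ : StrictMono φ) {a : ℝ} (hφa : ∀ l < p.natDegree, φ l ∈ Set.Ioc a (a + 2 * π))
    (hroot : ∀ l < p.natDegree, p.IsRoot (exp (φ l * I))) :
    ∀ w ∈ p.roots, ‖w‖ = 1 := by
  set S := (range p.natDegree).image fun l ↦ exp (φ l * I)
  have hinj : Set.InjOn (fun l ↦ exp (φ l * I)) (range p.natDegree) := by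
    intro l hl m hm hlm
    refine hφ.injective <| Circle.exp_injOn_Ioc (add_sub_cancel_left a _).le
      (hφa l (by simpa using hl)) (hφa m (by simpa using hm)) ?_
    simpa only [← Circle.coe_exp, Circle.coe_inj] using hlm
  have hS : p.roots = S.val := by
    refine roots_eq_of_natDegree_le_card_of_ne_zero ?_ ?_ hp
    · simp only [S, mem_image, mem_range]
      rintro _ ⟨l, hl, rfl⟩
      exact hroot l hl
    · rw [card_image_of_injOn hinj, card_range]
  intro w hw
  rw [hS, mem_val, mem_image] at hw
  obtain ⟨l, -, rfl⟩ := hw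
  exact Complex.norm_exp_ofReal_mul_I _

lemma exp_mul_I_pow_sub_pow {j K : ℕ} (hj : j ≤ K) (θ : ℝ) :
    exp (θ * I) ^ j - exp (θ * I) ^ (K - j) =
      -2 * I * exp (K * θ / 2 * I) * Complex.sin (((K / 2 - j) * θ : ℝ)) := by
  set x : ℂ := (((K / 2 - j) * θ : ℝ) : ℂ)
  have hpow : exp (θ * I) ^ j = exp (K * θ / 2 * I) * exp (-x * I) := by
    rw [← Complex.exp_nat_mul, ← Complex.exp_add]
    congr 1
    simp only [x]
    push_cast
    ring
  have hpow_sub : exp (θ * I) ^ (K - j) = exp (K * θ / 2 * I) * exp (x * I) := by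
    rw [← Complex.exp_nat_mul, ← Complex.exp_add]
    congr 1
    simp only [x]
    push_cast [Nat.cast_sub hj]
    ring
  rw [hpow, hpow_sub, Complex.sin]
  linear_combination exp (K * θ / 2 * I) * (exp (-x * I) - exp (x * I)) * Complex.I_sq

lemma range_succ_eq_insert_Icc (s : ℕ) : range (s + 1) = insert 0 (Icc 1 s) := by
  ext j
  simp only [mem_range, mem_insert, mem_Icc]
  omega

lemma sin_odd_mul_pi_div_two (l : ℕ) : Real.sin ((2 * l + 1) * π / 2) = (-1) ^ l := by
  rw [show (2 * l + 1) * π / 2 = l * π + π / 2 by ring, Real.sin_add_pi_div_two,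
    Real.cos_nat_mul_pi]

noncomputable def antiReciprocalPoly (K s : ℕ) (c : ℕ → ℝ) : ℂ[X] :=
  ∑ j ∈ range (s + 1), C ((-1) ^ j * (c j : ℂ)) * (X ^ j - X ^ (K - j))

noncomputable def antiReciprocalTrig (K s : ℕ) (c : ℕ → ℝ) (θ : ℝ) : ℝ :=
  ∑ j ∈ range (s + 1), (-1) ^ j * c j * Real.sin ((K / 2 - j) * θ)

section

variable {K s : ℕ} {c : ℕ → ℝ}

lemma eval_antiReciprocalPoly (z : ℂ) : (antiReciprocalPoly K s c).eval z =
    ∑ j ∈ range (s + 1), (-1) ^ j * (c j : ℂ) * (z ^ j - z ^ (K - j)) := by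
  simp [antiReciprocalPoly, eval_finsetSum]

lemma coeff_antiReciprocalPoly (n : ℕ) : (antiReciprocalPoly K s c).coeff n =
    ∑ j ∈ range (s + 1),
      (-1) ^ j * (c j : ℂ) * ((if n = j then 1 else 0) - if n = K - j then 1 else 0) := by
  rw [antiReciprocalPoly, finsetSum_coeff]
  refine sum_congr rfl fun j _ ↦ ?_
  rw [coeff_C_mul, coeff_sub, coeff_X_pow, coeff_X_pow]

lemma coeff_antiReciprocalPoly_of_lt (hsK : s < K) {n : ℕ} (hn : K < n) :
    (antiReciprocalPoly K s c).coeff n = 0 := by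
  rw [coeff_antiReciprocalPoly]
  refine sum_eq_zero fun j hj ↦ ?_
  have : j ≤ s := mem_range_succ_iff.mp hj
  rw [if_neg (by omega), if_neg (by omega)]
  simp

lemma coeff_antiReciprocalPoly_self (hsK : s < K) (hc0 : c 0 = 1) :
    (antiReciprocalPoly K s c).coeff K = -1 := by
  rw [coeff_antiReciprocalPoly, sum_eq_single_of_mem 0 (by simp)]
  · simp [hc0, show K ≠ 0 by omega]
  · intro j hj hj0
    have : j ≤ s := mem_range_succ_iff.mp hj
    rw [if_neg (by omega), if_neg (by omega)]
    simp

lemma natDegree_antiReciprocalPoly (hsK : s < K) (hc0 : c 0 = 1) :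
    (antiReciprocalPoly K s c).natDegree = K :=
  natDegree_eq_of_le_of_coeff_ne_zero
    (natDegree_le_iff_coeff_eq_zero.mpr fun _ hn ↦
      coeff_antiReciprocalPoly_of_lt hsK (by exact_mod_cast hn))
    (by simp [coeff_antiReciprocalPoly_self hsK hc0])

lemma leadingCoeff_antiReciprocalPoly (hsK : s < K) (hc0 : c 0 = 1) :
    (antiReciprocalPoly K s c).leadingCoeff = -1 := by
  rw [leadingCoeff, natDegree_antiReciprocalPoly hsK hc0, coeff_antiReciprocalPoly_self hsK hc0]

lemma eval_exp_antiReciprocalPoly (hsK : s ≤ K) (θ : ℝ) :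
    (antiReciprocalPoly K s c).eval (exp (θ * I)) =
      -2 * I * exp (K * θ / 2 * I) * antiReciprocalTrig K s c θ := by
  simp only [eval_antiReciprocalPoly, antiReciprocalTrig, Complex.ofReal_sum, mul_sum]
  refine sum_congr rfl fun j hj ↦ ?_
  rw [exp_mul_I_pow_sub_pow (by have := mem_range_succ_iff.mp hj; omega)]
  push_cast
  ring

lemma neg_one_pow_mul_antiReciprocalTrig_pos (hK : K ≠ 0) (hc0 : c 0 = 1)
    (hc : ∑ j ∈ Icc 1 s, |c j| < 1) (l : ℕ) :
    0 < (-1) ^ l * antiReciprocalTrig K s c ((2 * l + 1) * π / K) := by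
  set θ := (2 * l + 1) * π / K with hθ
  set R := ∑ j ∈ Icc 1 s, (-1) ^ j * c j * Real.sin ((K / 2 - j) * θ)
  have hlead : Real.sin ((K / 2 - (0 : ℕ)) * θ) = (-1) ^ l := by
    rw [← sin_odd_mul_pi_div_two, hθ]
    congr 1
    field_simp
    ring
  have hR : |R| < 1 := by
    refine (abs_sum_le_sum_abs _ _).trans_lt ((sum_le_sum fun j _ ↦ ?_).trans_lt hc)
    rw [abs_mul, abs_mul, abs_neg_one_pow, one_mul]
    exact mul_le_of_le_one_right (abs_nonneg _) (Real.abs_sin_le_one _)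
  have hsplit : antiReciprocalTrig K s c θ = (-1) ^ l + R := by
    rw [antiReciprocalTrig, range_succ_eq_insert_Icc, sum_insert (by simp), hlead, hc0]
    simp [R]
  rw [hsplit]
  rcases neg_one_pow_eq_or ℝ l with h | h <;> rw [h] <;> linarith [abs_lt.mp hR]

theorem norm_eq_one_of_mem_roots_antiReciprocalPoly (hsK : s < K) (hc0 : c 0 = 1)
    (hc : ∑ j ∈ Icc 1 s, |c j| < 1) : ∀ w ∈ (antiReciprocalPoly K s c).roots, ‖w‖ = 1 := by
  have hK : (0 : ℝ) < K := by exact_mod_cast (Nat.zero_le s).trans_lt hsK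
  set θ : ℕ → ℝ := fun l ↦ (2 * l + 1) * π / K
  have hθ : Monotone θ := fun a b hab ↦ by simp only [θ]; gcongr
  have hzero : ∀ l, ∃ φ ∈ Set.Ioo (θ l) (θ (l + 1)), antiReciprocalTrig K s c φ = 0 := by
    intro l
    refine exists_mem_Ioo_eq_zero_of_mul_neg (by unfold antiReciprocalTrig; fun_prop)
      (hθ l.le_succ) ?_
    have h0 : 0 < (-1) ^ l * antiReciprocalTrig K s c (θ l) :=
      neg_one_pow_mul_antiReciprocalTrig_pos (by omega) hc0 hc l
    have h1 : 0 < (-1) ^ (l + 1) * antiReciprocalTrig K s c (θ (l + 1)) :=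
      neg_one_pow_mul_antiReciprocalTrig_pos (by omega) hc0 hc (l + 1)
    rcases neg_one_pow_eq_or ℝ l with h | h <;> rw [pow_succ, h] at h1 <;> rw [h] at h0 <;>
      nlinarith
  choose φ hφ hφ0 using hzero
  have hp : antiReciprocalPoly K s c ≠ 0 := fun h ↦ by
    simpa [h] using leadingCoeff_antiReciprocalPoly hsK hc0
  refine norm_eq_one_of_mem_roots_of_isRoot_exp hp (a := θ 0)
    (strictMono_nat_of_lt_succ fun l ↦ (hφ l).2.trans (hφ (l + 1)).1) (fun l hl ↦ ?_) fun l _ ↦ ?_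
  · rw [natDegree_antiReciprocalPoly hsK hc0] at hl
    have hθK : θ K = θ 0 + 2 * π := by
      simp only [θ]
      field_simp
      ring
    exact ⟨(hθ l.zero_le).trans_lt (hφ l).1, hθK ▸ (hφ l).2.le.trans (hθ hl)⟩
  · rw [IsRoot, eval_exp_antiReciprocalPoly hsK.le, hφ0]
    simp

lemma eval_antiReciprocalPoly_update (hc0 : c 0 = 1) (t : ℝ) (z : ℂ) :
    (antiReciprocalPoly K s (Function.update (fun j ↦ t * c j) 0 1)).eval z =
      t * (antiReciprocalPoly K s c).eval z + (1 - t) * (1 - z ^ K) := by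
  simp only [eval_antiReciprocalPoly, sum_range_succ', Function.update_of_ne (Nat.succ_ne_zero _),
    Function.update_self, hc0, Nat.sub_zero, Nat.succ_eq_add_one]
  rw [mul_add, mul_sum, add_assoc]
  congr 1
  · exact sum_congr rfl fun _ _ ↦ by push_cast; ring
  · push_cast
    ring

lemma abs_norm_sub_one_pow_le_of_isRoot (hsK : s < K) (hc0 : c 0 = 1)
    (hc : ∑ j ∈ Icc 1 s, |c j| ≤ 1) {z : ℂ} (hz : (antiReciprocalPoly K s c).IsRoot z) {t : ℝ}
    (ht : t ∈ Set.Ico 0 1) : |‖z‖ - 1| ^ K ≤ (1 - t) * ‖1 - z ^ K‖ := by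
  set ct := Function.update (fun j ↦ t * c j) 0 1
  have hct0 : ct 0 = 1 := Function.update_self ..
  have hct : ∑ j ∈ Icc 1 s, |ct j| < 1 := calc
    ∑ j ∈ Icc 1 s, |ct j| = t * ∑ j ∈ Icc 1 s, |c j| := by
      rw [mul_sum]
      refine sum_congr rfl fun j hj ↦ ?_
      simp only [ct]
      rw [Function.update_of_ne (by simp at hj; omega), abs_mul, abs_of_nonneg ht.1]
    _ ≤ t := mul_le_of_le_one_right ht.1 hc
    _ < 1 := ht.2
  have h1t : ‖(1 : ℂ) - t‖ = 1 - t := by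
    norm_cast
    exact Real.norm_of_nonneg (sub_nonneg.mpr ht.2.le)
  have := abs_norm_sub_one_pow_le_norm_eval
    (norm_eq_one_of_mem_roots_antiReciprocalPoly hsK hct0 hct) z
  rwa [leadingCoeff_antiReciprocalPoly hsK hct0, natDegree_antiReciprocalPoly hsK hct0,
    eval_antiReciprocalPoly_update hc0, hz.eq_zero, mul_zero, zero_add, norm_neg, norm_one,
    one_mul, norm_mul, h1t] at this

end

theorem stmt7_general (N s : ℕ) (γ : ℕ → ℝ) (hγ0 : γ 0 = 1)
    (h : ∑ j ∈ Finset.Icc 1 s, |γ j| ≤ 1) (z : ℂ)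
    (hz : ∑ j ∈ Finset.range (s + 1),
        (-1 : ℂ) ^ j * (γ j : ℂ) * (z ^ j - z ^ (N + s + 1 - j)) = 0) :
    ‖z‖ = 1 := by
  have hroot : (antiReciprocalPoly (N + s + 1) s γ).IsRoot z := by
    rwa [IsRoot, eval_antiReciprocalPoly]
  have hlim : Tendsto (fun t : ℝ ↦ (1 - t) * ‖1 - z ^ (N + s + 1)‖) (𝓝[<] 1) (𝓝 0) := by
    refine tendsto_nhdsWithin_of_tendsto_nhds ?_
    simpa using ((continuous_const.sub continuous_id).mul continuous_const).tendsto
      (f := fun t : ℝ ↦ (1 - t) * ‖1 - z ^ (N + s + 1)‖) 1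
  have hle : |‖z‖ - 1| ^ (N + s + 1) ≤ 0 := ge_of_tendsto hlim <| by
    filter_upwards [Ioo_mem_nhdsLT one_pos] with t ht
    exact abs_norm_sub_one_pow_le_of_isRoot (by omega) hγ0 h hroot ⟨ht.1.le, ht.2⟩
  have habs : |‖z‖ - 1| = 0 := (pow_eq_zero_iff (by omega)).mp (hle.antisymm (by positivity))
  linarith [abs_eq_zero.mp habs]

/-- If `γ₀ = 1` and `∑_{j=1}^s |γ_j| ≤ 1`, then every complex zero of
`P(z) = ∑_{j=0}^s (-1)^j γ_j (z^j - z^{N+s+1-j})` lies on the unit circle. -/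
theorem stmt7 (N s : ℕ) (hs : s ≤ N) (γ : ℕ → ℝ) (hγ0 : γ 0 = 1)
    (h : ∑ j ∈ Finset.Icc 1 s, |γ j| ≤ 1) (z : ℂ)
    (hz : ∑ j ∈ Finset.range (s + 1),
        (-1 : ℂ) ^ j * (γ j : ℂ) * (z ^ j - z ^ (N + s + 1 - j)) = 0) :
    ‖z‖ = 1 :=
  stmt7_general N s γ hγ0 h z hz
end

section
/- Let P(z) = Σ_{j=0}^{s} (-1)^j γ_j (z^j − z^{N+s+1−j}) with γ_0 = 1, real γ_j, and 0 ≤ s ≤ N. If all zeros of P lie on the unit circle, then |γ_j| ≤ C(s,j) · C(N+s+1, j) / C(N, j) for every j = 1, …, s. -/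
/-!
Differentiating `P` `s + 1` times kills the terms `z ^ j` with `j ≤ s` and leaves
`z ^ (N - s) * Q z`, where `Q z = -∑ (-1) ^ j γ_j d_j z ^ (s - j)` with the falling factorials
`d_j = (N + s + 1 - j)⋯(N - j + 1)`. By Gauss–Lucas the zeros of `Q` stay in the closed unit
disc, so Vieta's bound gives `|γ_j| d_j ≤ C(s, j) d_0`, and
`d_0 / d_j = C(N + s + 1, j) / C(N, j)`.
-/

open Finset

theorem Nat.descFactorial_mul_choose (N m j : ℕ) :
    (N + m).descFactorial m * N.choose j = (N + m - j).descFactorial m * (N + m).choose j := by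
  refine Nat.eq_of_mul_eq_mul_left j.factorial_pos ?_
  have h₁ := Nat.descFactorial_mul_descFactorial (n := N + m) (Nat.le_add_right m j)
  have h₂ := Nat.descFactorial_mul_descFactorial (n := N + m) (Nat.le_add_left j m)
  rw [Nat.add_sub_cancel, Nat.add_sub_cancel_left] at h₁
  rw [Nat.add_sub_cancel] at h₂
  calc j.factorial * ((N + m).descFactorial m * N.choose j)
      = N.descFactorial j * (N + m).descFactorial m := by
        rw [Nat.descFactorial_eq_factorial_mul_choose N j]; ring
    _ = (N + m - j).descFactorial m * (N + m).descFactorial j := h₁.trans h₂.symm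
    _ = j.factorial * ((N + m - j).descFactorial m * (N + m).choose j) := by
        rw [Nat.descFactorial_eq_factorial_mul_choose (N + m) j]; ring

namespace Polynomial

theorem rootSet_derivative_subset_of_convex {P : ℂ[X]} {K : Set ℂ} (hK : Convex ℝ K)
    (hP : P.rootSet ℂ ⊆ K) : P.derivative.rootSet ℂ ⊆ K := by
  rcases lt_or_ge 0 P.degree with hdeg | hdeg
  · exact (rootSet_derivative_subset_convexHull_rootSet hdeg).trans (convexHull_min hP hK)
  · rw [eq_C_of_degree_le_zero hdeg, derivative_C, rootSet_zero]
    exact Set.empty_subset K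

theorem rootSet_iterate_derivative_subset_of_convex {P : ℂ[X]} {K : Set ℂ} (hK : Convex ℝ K)
    (hP : P.rootSet ℂ ⊆ K) (k : ℕ) : (derivative^[k] P).rootSet ℂ ⊆ K := by
  induction k with
  | zero => exact hP
  | succ k ih =>
    rw [Function.iterate_succ_apply']
    exact rootSet_derivative_subset_of_convex hK ih

theorem norm_coeff_le_of_roots_le {K : Type*} [NormedField K] {q : K[X]} (hq : q.Splits)
    {B : ℝ} (hB : ∀ z ∈ q.roots, ‖z‖ ≤ B) (i : ℕ) :
    ‖q.coeff i‖ ≤ ‖q.leadingCoeff‖ * (B ^ (q.natDegree - i) * q.natDegree.choose i) := by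
  rcases eq_or_ne q 0 with rfl | hq0
  · simp
  have hc : q.leadingCoeff⁻¹ ≠ 0 := inv_ne_zero (leadingCoeff_ne_zero.mpr hq0)
  set p := C q.leadingCoeff⁻¹ * q
  have hmonic : p.Monic :=
    monic_C_mul_of_mul_leadingCoeff_eq_one (inv_mul_cancel₀ (leadingCoeff_ne_zero.mpr hq0))
  have hbound := coeff_le_of_roots_le (f := RingHom.id K) i hmonic
    (by simpa [p] using hq.C_mul _) (by simpa [p, roots_C_mul _ hc] using hB)
  rw [map_id, coeff_C_mul, natDegree_C_mul hc, norm_mul, norm_inv] at hbound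
  rwa [← inv_mul_le_iff₀ (by simpa using hq0)]

theorem coeff_sum_range_C_mul_X_pow_sub {R : Type*} [Semiring R] (a : ℕ → R) {s j : ℕ}
    (hj : j ≤ s) : (∑ k ∈ range (s + 1), C (a k) * X ^ (s - k)).coeff (s - j) = a j := by
  rw [finsetSum_coeff, Finset.sum_eq_single j]
  · rw [coeff_C_mul_X_pow, if_pos rfl]
  · intro k hk hkj
    rw [coeff_C_mul_X_pow, if_neg (by rw [mem_range] at hk; omega)]
  · intro hj'
    exact absurd (mem_range.mpr (Nat.lt_succ_of_le hj)) hj'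

theorem natDegree_sum_range_C_mul_X_pow_sub_le {R : Type*} [Semiring R] (a : ℕ → R) (s : ℕ) :
    (∑ k ∈ range (s + 1), C (a k) * X ^ (s - k)).natDegree ≤ s :=
  natDegree_sum_le_of_forall_le _ _ fun k _ =>
    (natDegree_C_mul_X_pow_le _ _).trans (Nat.sub_le s k)

end Polynomial

open Polynomial

section AntiReciprocal

variable (N s : ℕ) (γ : ℕ → ℝ)

noncomputable def antiReciprocal : ℂ[X] :=
  ∑ j ∈ range (s + 1), C ((-1) ^ j * (γ j : ℂ)) * (X ^ j - X ^ (N + s + 1 - j))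

noncomputable def antiReciprocalCofactor : ℂ[X] :=
  ∑ j ∈ range (s + 1),
    C (-((-1) ^ j * (γ j : ℂ) * (N + s + 1 - j).descFactorial (s + 1))) * X ^ (s - j)

theorem eval_antiReciprocal (z : ℂ) : (antiReciprocal N s γ).eval z =
    ∑ j ∈ range (s + 1), (-1 : ℂ) ^ j * (γ j : ℂ) * (z ^ j - z ^ (N + s + 1 - j)) := by
  simp [antiReciprocal, eval_finsetSum, mul_assoc]

variable {N s γ}

theorem iterate_derivative_antiReciprocal (hs : s ≤ N) :
    derivative^[s + 1] (antiReciprocal N s γ) = X ^ (N - s) * antiReciprocalCofactor N s γ := by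
  rw [antiReciprocal, antiReciprocalCofactor, iterate_derivative_sum, mul_sum]
  refine sum_congr rfl fun j hj => ?_
  have hjs : j < s + 1 := mem_range.mp hj
  rw [iterate_derivative_C_mul, iterate_derivative_sub, iterate_derivative_X_pow_eq_C_mul,
    iterate_derivative_X_pow_eq_C_mul, Nat.descFactorial_of_lt hjs,
    show N + s + 1 - j - (s + 1) = N - s + (s - j) by omega, pow_add]
  simp only [Nat.cast_zero, map_zero, zero_mul, zero_sub, map_neg, map_mul]
  ring

theorem coeff_antiReciprocalCofactor {j : ℕ} (hj : j ≤ s) :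
    (antiReciprocalCofactor N s γ).coeff (s - j) =
      -((-1) ^ j * (γ j : ℂ) * (N + s + 1 - j).descFactorial (s + 1)) :=
  coeff_sum_range_C_mul_X_pow_sub _ hj

theorem coeff_self_antiReciprocalCofactor (hγ0 : γ 0 = 1) :
    (antiReciprocalCofactor N s γ).coeff s = -((N + s + 1).descFactorial (s + 1) : ℂ) := by
  have h := coeff_antiReciprocalCofactor (N := N) (γ := γ) (Nat.zero_le s)
  rwa [Nat.sub_zero, Nat.sub_zero, hγ0, pow_zero, Complex.ofReal_one, one_mul, one_mul] at h

theorem natDegree_antiReciprocalCofactor (hγ0 : γ 0 = 1) :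
    (antiReciprocalCofactor N s γ).natDegree = s := by
  refine natDegree_eq_of_le_of_coeff_ne_zero (natDegree_sum_range_C_mul_X_pow_sub_le _ s) ?_
  rw [coeff_self_antiReciprocalCofactor hγ0, neg_ne_zero, Nat.cast_ne_zero]
  exact (Nat.descFactorial_pos.mpr (by omega)).ne'

theorem abs_mul_descFactorial_le_of_rootSet_subset (hs : s ≤ N) (hγ0 : γ 0 = 1)
    (hP : (antiReciprocal N s γ).rootSet ℂ ⊆ Metric.closedBall 0 1) {j : ℕ} (hj : j ≤ s) :
    |γ j| * (N + s + 1 - j).descFactorial (s + 1) ≤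
      s.choose j * (N + s + 1).descFactorial (s + 1) := by
  set Q := antiReciprocalCofactor N s γ
  have hdeg : Q.natDegree = s := natDegree_antiReciprocalCofactor hγ0
  have hroots : ∀ z ∈ Q.roots, ‖z‖ ≤ 1 := by
    intro z hz
    have hD := rootSet_iterate_derivative_subset_of_convex (convex_closedBall 0 1) hP (s + 1)
    rw [iterate_derivative_antiReciprocal hs] at hD
    have hz' : z ∈ (X ^ (N - s) * Q).rootSet ℂ := by
      obtain ⟨hQ0, hQz⟩ := mem_roots'.mp hz
      rw [mem_rootSet, coe_aeval_eq_eval, eval_mul, hQz.eq_zero, mul_zero]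
      exact ⟨mul_ne_zero (pow_ne_zero _ X_ne_zero) hQ0, rfl⟩
    simpa using hD hz'
  have hvieta := norm_coeff_le_of_roots_le (IsAlgClosed.splits Q) hroots (s - j)
  rw [leadingCoeff, hdeg, coeff_antiReciprocalCofactor hj, coeff_self_antiReciprocalCofactor hγ0,
    Nat.sub_sub_self hj, Nat.choose_symm hj] at hvieta
  simp only [norm_neg, norm_mul, norm_pow, norm_one, one_pow, one_mul, Complex.norm_real,
    Real.norm_eq_abs, Complex.norm_natCast] at hvieta
  linarith

end AntiReciprocal

theorem stmt8_general (N s : ℕ) (hs : s ≤ N) (γ : ℕ → ℝ) (hγ0 : γ 0 = 1)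
    (h : ∀ z : ℂ,
      ∑ j ∈ Finset.range (s + 1),
          (-1 : ℂ) ^ j * (γ j : ℂ) * (z ^ j - z ^ (N + s + 1 - j)) = 0 → ‖z‖ = 1)
    (j : ℕ) (hj : j ≤ s) :
    |γ j| ≤ (s.choose j * (N + s + 1).choose j : ℝ) / (N.choose j) := by
  have hP : (antiReciprocal N s γ).rootSet ℂ ⊆ Metric.closedBall 0 1 := by
    intro z hz
    rw [mem_rootSet, coe_aeval_eq_eval, eval_antiReciprocal] at hz
    exact mem_closedBall_zero_iff.mpr (h z hz.2).le
  have hbound := abs_mul_descFactorial_le_of_rootSet_subset hs hγ0 hP hj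
  have hkey : ((N + s + 1).descFactorial (s + 1) * N.choose j : ℝ) =
      (N + s + 1 - j).descFactorial (s + 1) * (N + s + 1).choose j := by
    exact_mod_cast Nat.descFactorial_mul_choose N (s + 1) j
  have hdj : (0 : ℝ) < (N + s + 1 - j).descFactorial (s + 1) := by
    exact_mod_cast Nat.descFactorial_pos.mpr (by omega)
  have hNj : (0 : ℝ) < N.choose j := by exact_mod_cast Nat.choose_pos (hj.trans hs)
  rw [le_div_iff₀ hNj]
  refine le_of_mul_le_mul_right ?_ hdj
  calc |γ j| * N.choose j * (N + s + 1 - j).descFactorial (s + 1)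
      = |γ j| * (N + s + 1 - j).descFactorial (s + 1) * N.choose j := by ring
    _ ≤ s.choose j * (N + s + 1).descFactorial (s + 1) * N.choose j :=
        mul_le_mul_of_nonneg_right hbound hNj.le
    _ = s.choose j * (N + s + 1).choose j * (N + s + 1 - j).descFactorial (s + 1) := by
        rw [mul_assoc, hkey]; ring

/-- If all zeros of `P(z) = ∑_{j=0}^s (-1)^j γ_j (z^j - z^{N+s+1-j})`, `γ₀ = 1`, lie
on the unit circle, then `|γ_j| ≤ C(s,j) C(N+s+1,j) / C(N,j)` for `j = 1, …, s`. -/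
theorem stmt8 (N s : ℕ) (hs : s ≤ N) (γ : ℕ → ℝ) (hγ0 : γ 0 = 1)
    (h : ∀ z : ℂ,
      ∑ j ∈ Finset.range (s + 1),
          (-1 : ℂ) ^ j * (γ j : ℂ) * (z ^ j - z ^ (N + s + 1 - j)) = 0 → ‖z‖ = 1)
    (j : ℕ) (h1 : 1 ≤ j) (hj : j ≤ s) :
    |γ j| ≤ (s.choose j * (N + s + 1).choose j : ℝ) / (N.choose j) :=
  stmt8_general N s hs γ hγ0 h j hj
end

section
/- For all integers 0 ≤ s ≤ N, the identity (2^s/s!) (1 − z²)^s U_N^{(s)}(z) = (−1)^s Σ_{j=0}^{s} (−1)^j C(N−j, N−s) C(N+s+1, j) U_{N+s−2j}(z) holds as an identity of polynomials. -/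
/-
Write `L_s p = (2^s/s!) (1 - X²)^s p⁽ˢ⁾` and `R_σ q = 2 (1 - X²) q' + 4 σ X q`. Differentiating
`L_s p` gives `(s + 1) L_{s+1} p = R_s (L_s p)`, while the identity
`2 (1 - X²) U_n' = (n + 2) U_{n-1} - n U_{n+1}` and the three-term recurrence give
`R_σ U_n = (n + 2 + 2σ) U_{n-1} + (2σ - n) U_{n+1}`. Hence `R_s` sends the expansion claimed for `s`
to `-(s + 1)` times the one claimed for `s + 1`, provided the coefficients satisfy a two-term
recurrence; that recurrence follows from Pascal's rule and
`(n choose k+1) (k+1) = (n choose k) (n-k)` applied to both binomial factors.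
Induction on `s` concludes.
-/

open Polynomial Finset

theorem Finset.sum_range_add_sum_range_shift {M : Type*} [AddCommMonoid M] (f g : ℕ → M) (n : ℕ)
    (hg : g (n + 1) = 0) :
    ∑ j ∈ range (n + 1), f j + ∑ j ∈ range (n + 1), g j =
      ∑ j ∈ range (n + 1), (f j + g (j + 1)) + g 0 := by
  rw [sum_add_distrib, sum_range_succ (fun j => g (j + 1)), hg, add_zero, sum_range_succ' g,
    add_assoc]

namespace Polynomial.Chebyshev

variable {R : Type*} [CommRing R]

theorem two_mul_one_sub_X_sq_mul_derivative_U (n : ℤ) :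
    2 * (1 - X ^ 2) * derivative (U R n) =
      ((n : R[X]) + 2) * U R (n - 1) - (n : R[X]) * U R (n + 1) := by
  have hT := add_one_mul_T_eq_poly_in_U (R := R) n
  have hTU := T_eq_U_sub_X_mul_U R (n + 1)
  have hU := U_add_one R n
  rw [add_sub_cancel_right] at hTU
  linear_combination 2 * hT - (2 * (n : R[X]) + 2) * hTU - ((n : R[X]) + 2) * hU

noncomputable def raisingOp (σ : R) : R[X] →ₗ[R] R[X] :=
  LinearMap.mulLeft R (2 * (1 - X ^ 2)) ∘ₗ derivative +
    LinearMap.mulLeft R (Polynomial.C (4 * σ) * X)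

theorem raisingOp_apply (σ : R) (p : R[X]) :
    raisingOp σ p = 2 * (1 - X ^ 2) * derivative p + Polynomial.C (4 * σ) * X * p := rfl

theorem raisingOp_U (σ : R) (n : ℤ) :
    raisingOp σ (U R n) = Polynomial.C (n + 2 + 2 * σ) * U R (n - 1) +
      Polynomial.C (2 * σ - n) * U R (n + 1) := by
  have hU := U_add_one R n
  rw [raisingOp_apply, two_mul_one_sub_X_sq_mul_derivative_U]
  simp only [map_add, map_sub, map_mul, map_ofNat, map_intCast]
  linear_combination -2 * Polynomial.C σ * hU

end Polynomial.Chebyshev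

open Polynomial.Chebyshev (U raisingOp raisingOp_apply raisingOp_U)

section CommRing

variable {R : Type*} [CommRing R]

theorem one_sub_X_sq_mul_derivative_one_sub_X_sq_pow (s : ℕ) :
    (1 - X ^ 2) * derivative ((1 - X ^ 2 : R[X]) ^ s) =
      -(2 * (s : R[X]) * X) * (1 - X ^ 2) ^ s := by
  cases s with
  | zero => simp
  | succ s =>
    rw [derivative_pow_succ]
    simp only [derivative_sub, derivative_one, derivative_X_pow, map_add, map_one, map_natCast]
    push_cast
    ring

variable (R) in
def derivUCoeff (N s j : ℕ) : R :=
  (-1) ^ j * ((N - j).choose (N - s) : R) * ((N + s + 1).choose j : R)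

variable (R) in
noncomputable def derivUExpansion (N s : ℕ) : R[X] :=
  ∑ j ∈ range (s + 1), C (derivUCoeff R N s j) * U R ((N : ℤ) + s - 2 * j)

theorem derivUCoeff_succ_of_lt {N s : ℕ} (hs : s < N) : derivUCoeff R N s (s + 1) = 0 := by
  rw [derivUCoeff, Nat.choose_eq_zero_of_lt (by omega)]
  simp

theorem derivUCoeff_recurrence_zero {N s : ℕ} (hs : s < N) :
    derivUCoeff R N s 0 * (2 * s - (N + s)) = -(s + 1) * derivUCoeff R N (s + 1) 0 := by
  have h := Nat.choose_succ_right_eq N (N - (s + 1))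
  rw [show N - (s + 1) + 1 = N - s by omega, show N - (N - (s + 1)) = s + 1 by omega] at h
  have hR := congrArg (Nat.cast : ℕ → R) h
  push_cast [Nat.cast_sub hs.le] at hR
  simp only [derivUCoeff, pow_zero, one_mul, Nat.sub_zero, Nat.choose_zero_right, Nat.cast_one,
    mul_one]
  linear_combination -hR

end CommRing

section Field

variable {K : Type*} [Field K] [CharZero K]

noncomputable def scaledIterDeriv (s : ℕ) (p : K[X]) : K[X] :=
  C (2 ^ s / s.factorial : K) * (1 - X ^ 2) ^ s * derivative^[s] p

theorem C_succ_mul_scaledIterDeriv_succ (s : ℕ) (p : K[X]) :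
    C ((s : K) + 1) * scaledIterDeriv (s + 1) p = raisingOp (s : K) (scaledIterDeriv s p) := by
  have hcoeff : C ((s : K) + 1) * C (2 ^ (s + 1) / (s + 1).factorial : K) =
      2 * C (2 ^ s / s.factorial : K) := by
    rw [← C_mul, ← map_ofNat C, ← C_mul, Nat.factorial_succ]
    congr 1
    push_cast
    field_simp
    ring
  have hpow := one_sub_X_sq_mul_derivative_one_sub_X_sq_pow (R := K) s
  rw [raisingOp_apply, scaledIterDeriv, scaledIterDeriv, Function.iterate_succ_apply',
    derivative_mul, derivative_mul, derivative_C]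
  simp only [map_mul, map_ofNat, map_natCast]
  linear_combination (1 - X ^ 2) ^ (s + 1) * derivative (derivative^[s] p) * hcoeff -
    2 * C (2 ^ s / s.factorial : K) * derivative^[s] p * hpow

theorem derivUCoeff_recurrence_succ {N s j : ℕ} (hj : j ≤ s) (hs : s < N) :
    derivUCoeff K N s j * (N + s - 2 * j + 2 + 2 * s) +
        derivUCoeff K N s (j + 1) * (2 * s - (N + s - 2 * (j + 1))) =
      -(s + 1) * derivUCoeff K N (s + 1) (j + 1) := by
  have hNs : (N : K) - s ≠ 0 := sub_ne_zero.mpr (by exact_mod_cast hs.ne')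
  have hPascalLeft : ((N - j).choose (N - s) : K) =
      (N - (j + 1)).choose (N - s) + (N - (j + 1)).choose (N - (s + 1)) := by
    rw [show N - j = N - (j + 1) + 1 by omega, show N - s = N - (s + 1) + 1 by omega,
      Nat.choose_succ_succ']
    push_cast
    ring
  have hPascalRight : ((N + (s + 1) + 1).choose (j + 1) : K) =
      (N + s + 1).choose j + (N + s + 1).choose (j + 1) := by
    rw [show N + (s + 1) + 1 = N + s + 1 + 1 by ring, Nat.choose_succ_succ']
    push_cast
    ring
  have hRatioLeft : ((N - (j + 1)).choose (N - s) : K) =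
      (N - (j + 1)).choose (N - (s + 1)) * (s - j) / (N - s) := by
    have h := Nat.choose_succ_right_eq (N - (j + 1)) (N - (s + 1))
    rw [show N - (s + 1) + 1 = N - s by omega,
      show N - (j + 1) - (N - (s + 1)) = s - j by omega] at h
    have hK := congrArg (Nat.cast : ℕ → K) h
    push_cast [Nat.cast_sub hs.le, Nat.cast_sub hj] at hK
    field_simp
    linear_combination hK
  have hRatioRight : ((N + s + 1).choose (j + 1) : K) =
      (N + s + 1).choose j * (N + s + 1 - j) / (j + 1) := by
    have h := Nat.choose_succ_right_eq (N + s + 1) j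
    have hK := congrArg (Nat.cast : ℕ → K) h
    push_cast [Nat.cast_sub (show j ≤ N + s + 1 by omega)] at hK
    field_simp
    linear_combination hK
  simp only [derivUCoeff]
  rw [hPascalLeft, hPascalRight, hRatioLeft, hRatioRight]
  field_simp
  ring

theorem raisingOp_derivUExpansion {N s : ℕ} (hs : s < N) :
    raisingOp (s : K) (derivUExpansion K N s) =
      C (-(s + 1 : K)) * derivUExpansion K N (s + 1) := by
  have hterm (j : ℕ) :
      raisingOp (s : K) (C (derivUCoeff K N s j) * U K ((N : ℤ) + s - 2 * j)) =
        C (derivUCoeff K N s j * (N + s - 2 * j + 2 + 2 * s)) *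
            U K ((N : ℤ) + (s + 1 : ℕ) - 2 * (j + 1 : ℕ)) +
          C (derivUCoeff K N s j * (2 * s - (N + s - 2 * j))) *
            U K ((N : ℤ) + (s + 1 : ℕ) - 2 * j) := by
    rw [← smul_eq_C_mul, map_smul, raisingOp_U, smul_eq_C_mul]
    push_cast
    simp only [map_add, map_sub, map_mul, map_natCast, map_ofNat]
    ring_nf
  rw [derivUExpansion, map_sum, sum_congr rfl (fun j _ => hterm j), sum_add_distrib,
    sum_range_add_sum_range_shift (M := K[X]) _ _ _ (by simp [derivUCoeff_succ_of_lt hs]),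
    derivUExpansion, mul_sum, sum_range_succ' _ (s + 1)]
  congr 1
  · refine sum_congr rfl fun j hj => ?_
    push_cast
    rw [← add_mul, ← C_add, ← mul_assoc, ← C_mul,
      derivUCoeff_recurrence_succ (Nat.lt_succ_iff.mp (mem_range.mp hj)) hs]
  · push_cast
    rw [← mul_assoc, ← C_mul, ← derivUCoeff_recurrence_zero hs]
    ring_nf

theorem scaledIterDeriv_U {N s : ℕ} (hs : s ≤ N) :
    scaledIterDeriv s (U K N) = C ((-1) ^ s) * derivUExpansion K N s := by
  induction s with
  | zero => simp [scaledIterDeriv, derivUExpansion, derivUCoeff]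
  | succ s ih =>
    have hs' : s < N := hs
    apply mul_left_cancel₀ (C_ne_zero.mpr (Nat.cast_add_one_ne_zero s) : C ((s : K) + 1) ≠ 0)
    rw [C_succ_mul_scaledIterDeriv_succ, ih hs'.le, ← smul_eq_C_mul, map_smul,
      raisingOp_derivUExpansion hs', smul_eq_C_mul, ← mul_assoc, ← mul_assoc, ← C_mul, ← C_mul]
    ring_nf

end Field

/-- `(2^s/s!)(1-z²)^s U_N^{(s)}(z)
  = (-1)^s ∑_{j=0}^s (-1)^j C(N-j,N-s) C(N+s+1,j) U_{N+s-2j}(z)`. -/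
theorem stmt10 (N s : ℕ) (hs : s ≤ N) :
    Polynomial.C ((2 ^ s : ℚ) / s.factorial) * (1 - Polynomial.X ^ 2) ^ s *
        Polynomial.derivative^[s] (Polynomial.Chebyshev.U ℚ N) =
      Polynomial.C ((-1 : ℚ) ^ s) *
        ∑ j ∈ Finset.range (s + 1),
          Polynomial.C ((-1 : ℚ) ^ j * ((N - j).choose (N - s) : ℚ) *
              ((N + s + 1).choose j : ℚ)) *
            Polynomial.Chebyshev.U ℚ ((N : ℤ) + s - 2 * j) :=
  scaledIterDeriv_U hs
end

section
/- For every integer N ≥ 2: 4(1 − z²)² U_N''(z) = (N+3)(N+2) U_{N−2}(z) − 2(N+3)(N−1) U_N(z) + N(N−1) U_{N+2}(z). -/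
open Polynomial

lemma stmt12_key (n : ℤ) :
    4 * (1 - X ^ 2) ^ 2 *
        derivative (derivative (Polynomial.Chebyshev.U ℚ n)) =
      ((n : ℚ[X]) + 3) * ((n : ℚ[X]) + 2) * Polynomial.Chebyshev.U ℚ (n - 2) -
        2 * ((n : ℚ[X]) + 3) * ((n : ℚ[X]) - 1) * Polynomial.Chebyshev.U ℚ n +
        (n : ℚ[X]) * ((n : ℚ[X]) - 1) * Polynomial.Chebyshev.U ℚ (n + 2) := by
  open Polynomial.Chebyshev in
  have hXc := U_add_one ℚ n
  have hXd := U_add_two ℚ n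
  have hXb := U_sub_two ℚ n
  have hT := T_eq_U_sub_X_mul_U ℚ (n + 1)
  simp only [add_sub_cancel_right] at hT
  have hX2c : 4 * X ^ 2 * Chebyshev.U ℚ n =
      Chebyshev.U ℚ (n + 2) + 2 * Chebyshev.U ℚ n + Chebyshev.U ℚ (n - 2) := by
    linear_combination -2 * X * hXc - hXd - hXb
  have hXt : 4 * X * Chebyshev.T ℚ (n + 1) =
      Chebyshev.U ℚ (n + 2) - Chebyshev.U ℚ (n - 2) := by
    linear_combination 4 * X * hT - 2 * hXd - hX2c
  have hD1 : (1 - X ^ 2) * derivative (Chebyshev.U ℚ n) =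
      X * Chebyshev.U ℚ n - ((n : ℚ[X]) + 1) * Chebyshev.T ℚ (n + 1) := by
    have h := add_one_mul_T_eq_poly_in_U (R := ℚ) n
    push_cast at h ⊢
    linear_combination h
  have hD2 := congr_arg derivative hD1
  simp only [derivative_mul, derivative_sub, derivative_one, derivative_X_pow, derivative_X,
    T_derivative_eq_U, add_sub_cancel_right, derivative_intCast, derivative_add,
    derivative_ofNat, map_add, map_one, map_intCast, map_ofNat, C_eq_natCast,
    Nat.cast_ofNat] at hD2
  push_cast at hD2
  linear_combination (norm := (push_cast; ring_nf))
    4 * (1 - X ^ 2) * hD2 + 12 * X * hD1 + 3 * hX2c - 3 * ((n : ℚ[X]) + 1) * hXt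
      - (1 - ((n : ℚ[X]) + 1) ^ 2) * hX2c

/-- `4(1-z²)² U_N''(z) = (N+3)(N+2) U_{N-2} - 2(N+3)(N-1) U_N + N(N-1) U_{N+2}` for `N ≥ 2`. -/
theorem stmt12 (N : ℕ) (hN : 2 ≤ N) :
    4 * (1 - Polynomial.X ^ 2) ^ 2 *
        Polynomial.derivative (Polynomial.derivative (Polynomial.Chebyshev.U ℚ N)) =
      Polynomial.C (((N : ℚ) + 3) * ((N : ℚ) + 2)) * Polynomial.Chebyshev.U ℚ ((N : ℤ) - 2) -
        Polynomial.C (2 * ((N : ℚ) + 3) * ((N : ℚ) - 1)) * Polynomial.Chebyshev.U ℚ N +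
        Polynomial.C ((N : ℚ) * ((N : ℚ) - 1)) * Polynomial.Chebyshev.U ℚ ((N : ℤ) + 2) := by
  have h := stmt12_key (N : ℤ)
  simp only [map_mul, map_add, map_sub, map_ofNat, map_natCast, map_one]
  push_cast at h ⊢
  linear_combination h
end

section
/- For every integer N ≥ 3: 8(1 − z²)³ U_N^{(3)}(z) = (N+2)(N+3)(N+4) U_{N−3}(z) − 3(N−2)(N+3)(N+4) U_{N−1}(z) + 3(N−2)(N−1)(N+4) U_{N+1}(z) − (N−2)(N−1)N U_{N+3}(z). -/
open Polynomial
open Polynomial.Chebyshev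

lemma dU1 (n : ℤ) : 2 * (1 - X ^ 2) * derivative (U ℚ n) =
    ((n : ℚ[X]) + 2) * U ℚ (n - 1) - (n : ℚ[X]) * U ℚ (n + 1) := by
  have h := add_one_mul_T_eq_poly_in_U (R := ℚ) n
  have h2 := T_eq_U_sub_X_mul_U (R := ℚ) (n + 1)
  have h3 := U_add_two ℚ (n - 1)
  simp only [show n - 1 + 2 = n + 1 by ring, show n - 1 + 1 = n by ring] at h3
  linear_combination (norm := ring_nf) (2 : ℚ[X]) * h - 2 * ((n : ℚ[X]) + 1) * h2
    - ((n : ℚ[X]) + 2) * h3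

lemma dU2 (n : ℤ) : 4 * (1 - X ^ 2) ^ 2 * derivative (derivative (U ℚ n)) =
    ((n : ℚ[X]) + 2) * ((n : ℚ[X]) + 3) * U ℚ (n - 2)
      - 2 * ((n : ℚ[X]) - 1) * ((n : ℚ[X]) + 3) * U ℚ n
      + ((n : ℚ[X]) - 1) * (n : ℚ[X]) * U ℚ (n + 2) := by
  have e0 := congr_arg derivative (dU1 n)
  simp only [derivative_mul, derivative_sub, derivative_add, derivative_one, derivative_X_pow,
    derivative_intCast, derivative_ofNat, derivative_X] at e0
  have e1 := dU1 n
  have e2 := dU1 (n - 1)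
  have e3 := dU1 (n + 1)
  simp only [show n - 1 - 1 = n - 2 by ring, show n - 1 + 1 = n by ring,
    show n + 1 - 1 = n by ring, show n + 1 + 1 = n + 2 by ring] at e2 e3
  have r1 := U_add_two ℚ (n - 2)
  have r2 := U_add_two ℚ n
  simp only [show n - 2 + 2 = n by ring, show n - 2 + 1 = n - 1 by ring] at r1
  linear_combination (norm := (simp only [Polynomial.C_eq_natCast]; push_cast; ring_nf)) (2 * (1 - X ^ 2)) * e0 + (4 * X) * e1
    + ((n : ℚ[X]) + 2) * e2 - (n : ℚ[X]) * e3 - 2 * ((n : ℚ[X]) + 2) * r1 + 2 * (n : ℚ[X]) * r2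

lemma dU3 (n : ℤ) : 8 * (1 - X ^ 2) ^ 3 * derivative (derivative (derivative (U ℚ n))) =
    ((n : ℚ[X]) + 2) * ((n : ℚ[X]) + 3) * ((n : ℚ[X]) + 4) * U ℚ (n - 3)
      - 3 * ((n : ℚ[X]) - 2) * ((n : ℚ[X]) + 3) * ((n : ℚ[X]) + 4) * U ℚ (n - 1)
      + 3 * ((n : ℚ[X]) - 2) * ((n : ℚ[X]) - 1) * ((n : ℚ[X]) + 4) * U ℚ (n + 1)
      - ((n : ℚ[X]) - 2) * ((n : ℚ[X]) - 1) * (n : ℚ[X]) * U ℚ (n + 3) := by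
  have f0 := congr_arg derivative (dU2 n)
  simp only [derivative_mul, derivative_sub, derivative_add, derivative_one, derivative_X_pow,
    derivative_intCast, derivative_ofNat, derivative_X, derivative_pow] at f0
  have g0 := dU2 n
  have e1 := dU1 (n - 2)
  have e2 := dU1 n
  have e3 := dU1 (n + 2)
  simp only [show n - 2 - 1 = n - 3 by ring, show n - 2 + 1 = n - 1 by ring,
    show n + 2 - 1 = n + 1 by ring, show n + 2 + 1 = n + 3 by ring] at e1 e3
  have s1 := U_add_two ℚ (n - 3)
  have s2 := U_add_two ℚ (n - 1)
  have s3 := U_add_two ℚ (n + 1)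
  simp only [show n - 3 + 2 = n - 1 by ring, show n - 3 + 1 = n - 2 by ring,
    show n - 1 + 2 = n + 1 by ring, show n - 1 + 1 = n by ring,
    show n + 1 + 2 = n + 3 by ring, show n + 1 + 1 = n + 2 by ring] at s1 s2 s3
  linear_combination (norm := (simp only [Polynomial.C_eq_natCast]; push_cast; ring_nf))
    (2 * (1 - X ^ 2)) * f0 + (8 * X) * g0
    + ((n : ℚ[X]) + 2) * ((n : ℚ[X]) + 3) * e1 - 2 * ((n : ℚ[X]) - 1) * ((n : ℚ[X]) + 3) * e2
    + ((n : ℚ[X]) - 1) * (n : ℚ[X]) * e3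
    - 4 * ((n : ℚ[X]) + 2) * ((n : ℚ[X]) + 3) * s1
    + 8 * ((n : ℚ[X]) - 1) * ((n : ℚ[X]) + 3) * s2
    - 4 * ((n : ℚ[X]) - 1) * (n : ℚ[X]) * s3


/-- `8(1-z²)³ U_N^{(3)}(z) = (N+2)(N+3)(N+4) U_{N-3} - 3(N-2)(N+3)(N+4) U_{N-1}
 + 3(N-2)(N-1)(N+4) U_{N+1} - (N-2)(N-1)N U_{N+3}` for `N ≥ 3`. -/
theorem stmt13 (N : ℕ) (hN : 3 ≤ N) :
    8 * (1 - Polynomial.X ^ 2) ^ 3 *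
        Polynomial.derivative^[3] (Polynomial.Chebyshev.U ℚ N) =
      Polynomial.C (((N : ℚ) + 2) * ((N : ℚ) + 3) * ((N : ℚ) + 4)) *
          Polynomial.Chebyshev.U ℚ ((N : ℤ) - 3) -
        Polynomial.C (3 * ((N : ℚ) - 2) * ((N : ℚ) + 3) * ((N : ℚ) + 4)) *
          Polynomial.Chebyshev.U ℚ ((N : ℤ) - 1) +
        Polynomial.C (3 * ((N : ℚ) - 2) * ((N : ℚ) - 1) * ((N : ℚ) + 4)) *
          Polynomial.Chebyshev.U ℚ ((N : ℤ) + 1) -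
        Polynomial.C (((N : ℚ) - 2) * ((N : ℚ) - 1) * (N : ℚ)) *
          Polynomial.Chebyshev.U ℚ ((N : ℤ) + 3) := by
  have h := dU3 (N : ℤ)
  simp only [Function.iterate_succ, Function.iterate_zero, Function.comp_apply, id_eq]
  linear_combination (norm := (simp only [map_mul, map_add, map_sub, map_ofNat, map_one, Polynomial.C_eq_natCast, Polynomial.C_1]; push_cast; ring_nf)) h
end

section
/- For every integer N ≥ 0: Σ_{j=0}^{N} (−1)^j C(2N+1, N−j) U_{2j}(z) = 2^{2N} (1 − z²)^N. -/
open Polynomial Finset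

/-- Zero-extended signed coefficient. -/
noncomputable def cc (N : ℕ) (k : ℤ) : ℚ :=
  if 0 ≤ k ∧ k ≤ N then (-1 : ℚ) ^ k.toNat * ((2 * N + 1).choose (N - k.toNat) : ℚ) else 0

lemma cc_ofNat (N k : ℕ) (h : k ≤ N) :
    cc N k = (-1 : ℚ) ^ k * ((2 * N + 1).choose (N - k) : ℚ) := by
  simp [cc, h]

lemma cc_neg (N : ℕ) {k : ℤ} (h : k < 0) : cc N k = 0 := by
  simp [cc]; intro h'; omega

lemma cc_gt (N : ℕ) {k : ℤ} (h : (N : ℤ) < k) : cc N k = 0 := by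
  simp [cc]; intro h'; omega

lemma keyU (m : ℤ) : (4 : ℚ[X]) * (1 - X ^ 2) * Polynomial.Chebyshev.U ℚ m =
    2 * Polynomial.Chebyshev.U ℚ m - Polynomial.Chebyshev.U ℚ (m + 2)
      - Polynomial.Chebyshev.U ℚ (m - 2) := by
  have h1 := Polynomial.Chebyshev.U_add_two ℚ m
  have h2 := Polynomial.Chebyshev.U_sub_two ℚ m
  have h3 := Polynomial.Chebyshev.U_add_one ℚ m
  linear_combination (norm := ring_nf) h1 + h2 + 2 * X * h3


open Polynomial.Chebyshev in
lemma shiftB (N : ℕ) :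
    ∑ k ∈ range (N + 2), C (cc N k) * U ℚ (2 * k + 2) =
      ∑ k ∈ range (N + 2), C (cc N ((k : ℤ) - 1)) * U ℚ (2 * k) := by
  rw [Finset.sum_range_succ' (fun k => C (cc N ((k : ℤ) - 1)) * U ℚ (2 * k)) (N + 1),
      Finset.sum_range_succ (fun k => C (cc N (k : ℤ)) * U ℚ (2 * k + 2)) (N + 1)]
  have h0 : cc N (((0 : ℕ) : ℤ) - 1) = 0 := cc_neg N (by norm_num)
  have h1 : cc N ((N + 1 : ℕ) : ℤ) = 0 := cc_gt N (by push_cast; omega)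
  rw [h0, h1]
  simp only [map_zero, zero_mul, add_zero]
  refine Finset.sum_congr rfl fun i _ => ?_
  push_cast
  ring_nf

open Polynomial.Chebyshev in
lemma shiftC (N : ℕ) :
    ∑ k ∈ range (N + 2), C (cc N k) * U ℚ (2 * k - 2) =
      (∑ k ∈ range (N + 2), C (cc N ((k : ℤ) + 1)) * U ℚ (2 * k)) - C (cc N 0) := by
  rw [Finset.sum_range_succ' (fun k => C (cc N (k : ℤ)) * U ℚ (2 * k - 2)) (N + 1),
      Finset.sum_range_succ (fun k => C (cc N ((k : ℤ) + 1)) * U ℚ (2 * k)) (N + 1)]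
  have h1 : cc N (((N + 1 : ℕ) : ℤ) + 1) = 0 := cc_gt N (by push_cast; omega)
  have hU : U ℚ (2 * ((0 : ℕ) : ℤ) - 2) = -1 := by
    norm_num [Polynomial.Chebyshev.U_neg_two]
  rw [h1, hU]
  simp only [map_zero, zero_mul, add_zero, Nat.cast_zero, mul_neg_one]
  rw [Finset.sum_congr rfl (fun i (_ : i ∈ range (N + 1)) => ?_)]
  · ring
  · push_cast
    ring_nf

lemma pascal2 (M i : ℕ) :
    (M + 2).choose (i + 2) = M.choose (i + 2) + 2 * M.choose (i + 1) + M.choose i := by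
  rw [show M + 2 = M + 1 + 1 from rfl, Nat.choose_succ_succ (M + 1) (i + 1),
    Nat.choose_succ_succ M i, Nat.choose_succ_succ M (i + 1)]
  ring

lemma coef_step (N k : ℕ) (hk : 1 ≤ k) (hk2 : k ≤ N + 1) :
    cc (N + 1) k = 2 * cc N k - cc N ((k : ℤ) - 1) - cc N ((k : ℤ) + 1) := by
  obtain ⟨k, rfl⟩ : ∃ k', k = k' + 1 := ⟨k - 1, by omega⟩
  have e1 : ((k + 1 : ℕ) : ℤ) - 1 = ((k : ℕ) : ℤ) := by push_cast; ring
  have e2 : ((k + 1 : ℕ) : ℤ) + 1 = ((k + 2 : ℕ) : ℤ) := by push_cast; ring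
  rw [e1, e2]
  rcases Nat.lt_or_ge (k + 1) N with h | h
  · obtain ⟨i, rfl⟩ : ∃ i, N = k + i + 2 := ⟨N - k - 2, by omega⟩
    rw [cc_ofNat _ _ (by omega), cc_ofNat _ _ (by omega), cc_ofNat _ _ (by omega),
      cc_ofNat _ _ (by omega)]
    rw [show k + i + 2 + 1 - (k + 1) = i + 2 from by omega,
      show k + i + 2 - (k + 1) = i + 1 from by omega,
      show k + i + 2 - k = i + 2 from by omega,
      show k + i + 2 - (k + 2) = i from by omega]
    have hc : (2 * (k + i + 2 + 1) + 1).choose (i + 2) =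
        (2 * (k + i + 2) + 1).choose (i + 2) + 2 * (2 * (k + i + 2) + 1).choose (i + 1)
          + (2 * (k + i + 2) + 1).choose i := by
      rw [show 2 * (k + i + 2 + 1) + 1 = (2 * (k + i + 2) + 1) + 2 from by ring]
      exact pascal2 _ _
    have hcq : ((2 * (k + i + 2 + 1) + 1).choose (i + 2) : ℚ) =
        ((2 * (k + i + 2) + 1).choose (i + 2) : ℚ)
          + 2 * ((2 * (k + i + 2) + 1).choose (i + 1) : ℚ)
          + ((2 * (k + i + 2) + 1).choose i : ℚ) := by exact_mod_cast hc
    linear_combination ((-1 : ℚ) ^ (k + 1)) * hcq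
  · have h' : N = k + 1 ∨ N = k := by omega
    rcases h' with rfl | rfl
    · rw [cc_ofNat _ _ (by omega), cc_ofNat _ _ (by omega), cc_ofNat _ _ (by omega),
        cc_gt _ (by push_cast; omega)]
      rw [show k + 1 + 1 - (k + 1) = 1 from by omega,
        show k + 1 - (k + 1) = 0 from by omega,
        show k + 1 - k = 1 from by omega]
      simp [Nat.choose_one_right]
      ring
    · rw [cc_ofNat (N + 1) (N + 1) le_rfl, cc_ofNat N N le_rfl,
        cc_gt N (show (N : ℤ) < ((N + 1 : ℕ) : ℤ) by push_cast; omega),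
        cc_gt N (show (N : ℤ) < ((N + 2 : ℕ) : ℤ) by push_cast; omega)]
      rw [show N + 1 - (N + 1) = 0 from by omega, show N - N = 0 from by omega]
      simp
      ring

lemma coef_zero (N : ℕ) : cc (N + 1) 0 = 3 * cc N 0 - cc N 1 := by
  rcases N with _ | M
  · norm_num [cc]
  · rw [show (0 : ℤ) = ((0 : ℕ) : ℤ) from by norm_num,
      show (1 : ℤ) = ((1 : ℕ) : ℤ) from by norm_num]
    rw [cc_ofNat (M + 1 + 1) 0 (by omega), cc_ofNat (M + 1) 0 (by omega),
      cc_ofNat (M + 1) 1 (by omega)]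
    rw [Nat.sub_zero, Nat.sub_zero, show M + 1 - 1 = M from by omega]
    have h1 : (2 * (M + 2) + 1).choose (M + 2) =
        (2 * M + 3).choose (M + 2) + 2 * (2 * M + 3).choose (M + 1)
          + (2 * M + 3).choose M := by
      rw [show 2 * (M + 2) + 1 = (2 * M + 3) + 2 from by ring]
      exact pascal2 _ _
    have h2 : (2 * M + 3).choose (M + 2) = (2 * M + 3).choose (M + 1) := by
      have := Nat.choose_symm_half (M + 1)
      rwa [show 2 * (M + 1) + 1 = 2 * M + 3 from by ring] at this
    have hq : ((2 * (M + 2) + 1).choose (M + 2) : ℚ) =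
        3 * ((2 * M + 3).choose (M + 1) : ℚ) + ((2 * M + 3).choose M : ℚ) := by
      rw [h1, h2] at *
      push_cast
      ring
    rw [show 2 * (M + 1) + 1 = 2 * M + 3 from by ring]
    rw [hq]
    ring

open Polynomial.Chebyshev in
lemma key_s14 (N : ℕ) :
    ∑ k ∈ range (N + 2), C (cc (N + 1) k) * U ℚ (2 * k) =
      4 * (1 - X ^ 2) * ∑ k ∈ range (N + 2), C (cc N k) * U ℚ (2 * k) := by
  have main : ∑ k ∈ range (N + 2),
      (C (cc (N + 1) k) * U ℚ (2 * k) - 2 * (C (cc N k) * U ℚ (2 * k))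
        + C (cc N ((k : ℤ) - 1)) * U ℚ (2 * k) + C (cc N ((k : ℤ) + 1)) * U ℚ (2 * k))
      = C (cc N 0) := by
    rw [Finset.sum_eq_single 0]
    · have hU : U ℚ (2 * ((0 : ℕ) : ℤ)) = 1 := by norm_num [Polynomial.Chebyshev.U_zero]
      have hm : cc N (((0 : ℕ) : ℤ) - 1) = 0 := cc_neg N (by norm_num)
      rw [hU, hm]
      simp only [Nat.cast_zero, zero_add, map_zero]
      rw [coef_zero N, map_sub, map_mul, map_ofNat]
      ring
    · intro k hk hk0
      have h := coef_step N k (by omega) (by simp only [Finset.mem_range] at hk; omega)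
      rw [h, map_sub, map_sub, map_mul, map_ofNat]
      ring
    · intro h
      exact absurd (Finset.mem_range.mpr (by omega)) h
  have expand : ∀ k ∈ range (N + 2), 4 * (1 - X ^ 2) * (C (cc N k) * U ℚ (2 * k)) =
      2 * (C (cc N k) * U ℚ (2 * k)) - C (cc N k) * U ℚ (2 * k + 2)
        - C (cc N k) * U ℚ (2 * k - 2) := by
    intro k _
    linear_combination C (cc N k) * keyU (2 * k)
  rw [Finset.mul_sum, Finset.sum_congr rfl expand, Finset.sum_sub_distrib,
    Finset.sum_sub_distrib, shiftB, shiftC]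
  rw [Finset.sum_add_distrib, Finset.sum_add_distrib, Finset.sum_sub_distrib] at main
  linear_combination main

open Polynomial.Chebyshev in
lemma aux (N : ℕ) :
    ∑ k ∈ range (N + 1), C (cc N k) * U ℚ (2 * k) =
      C ((2 : ℚ) ^ (2 * N)) * (1 - X ^ 2) ^ N := by
  induction N with
  | zero => norm_num [cc, Polynomial.Chebyshev.U_zero]
  | succ N ih =>
    rw [key_s14 N, Finset.sum_range_succ, cc_gt N (by push_cast; omega), map_zero, zero_mul,
      add_zero, ih]
    rw [show (2 : ℚ) ^ (2 * (N + 1)) = 4 * 2 ^ (2 * N) from by ring, map_mul, map_ofNat]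
    ring

/-- `∑_{j=0}^N (-1)^j C(2N+1, N-j) U_{2j}(z) = 2^{2N} (1-z²)^N`. -/
theorem stmt14 (N : ℕ) :
    ∑ j ∈ Finset.range (N + 1),
        Polynomial.C ((-1 : ℚ) ^ j * ((2 * N + 1).choose (N - j) : ℚ)) *
          Polynomial.Chebyshev.U ℚ (2 * j) =
      Polynomial.C ((2 : ℚ) ^ (2 * N)) * (1 - Polynomial.X ^ 2) ^ N := by
  calc ∑ j ∈ Finset.range (N + 1),
        Polynomial.C ((-1 : ℚ) ^ j * ((2 * N + 1).choose (N - j) : ℚ)) *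
          Polynomial.Chebyshev.U ℚ (2 * j)
      = ∑ j ∈ Finset.range (N + 1), C (cc N j) * Polynomial.Chebyshev.U ℚ (2 * j) :=
        Finset.sum_congr rfl fun j hj => by
          rw [cc_ofNat N j (Nat.lt_succ_iff.mp (Finset.mem_range.mp hj))]
    _ = _ := aux N
end

section
/- For every integer N ≥ 1: Σ_{j=1}^{N} (−1)^{j−1} j · C(2N, N−j) U_{2j−1}(z) = N · 2^{2N−1} z (1 − z²)^{N−1}. -/
open Polynomial Finset

/-!
Put `z = cos θ` and `w = e^{2iθ}`, so that `4(z² - 1) = w⁻¹ (w - 1)²` and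
`T_{2k}(z) = (w^k + w^{-k})/2`. Expanding `(w - 1)^{2N}` binomially gives
`(4(z² - 1))^N = ∑_{k=0}^{2N} (-1)^k C(2N,k) T_{2k-2N}(z)`. Formally, the linear
map `X^k ↦ T_{2k+m}` turns multiplication by `(X - 1)²` into multiplication by
`2T₂ - 2 = 4(X² - 1)`, by the product formula `2 T_a T₂ = T_{a+2} + T_{a-2}`.
Differentiating with `T_n' = n U_{n-1}` and pairing `k` with `2N - k` (where
`U_{-n-1} = -U_{n-1}`) leaves twice the terms `k = N + j`, `1 ≤ j ≤ N`.
-/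

theorem Finset.sum_range_two_mul_add_one_eq_of_symm {M : Type*} [AddCommMonoid M] (f : ℕ → M)
    (N : ℕ) (hf : ∀ k ≤ 2 * N, f (2 * N - k) = f k) :
    ∑ k ∈ range (2 * N + 1), f k = f N + 2 • ∑ j ∈ Icc 1 N, f (N + j) := by
  have hlow : ∑ k ∈ range N, f k = ∑ j ∈ range N, f (N + (j + 1)) := by
    rw [← sum_range_reflect]
    refine sum_congr rfl fun j hj => ?_
    rw [mem_range] at hj
    rw [← hf _ (by omega)]
    congr 1
    omega
  rw [show 2 * N + 1 = N + (N + 1) by ring, sum_range_add, sum_range_succ', hlow,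
    ← Ico_add_one_right_eq_Icc, sum_Ico_eq_sum_range]
  simp only [add_zero, Nat.add_sub_cancel, add_comm 1]
  abel

theorem neg_one_pow_two_mul_sub {R : Type*} [Ring R] {N k : ℕ} (hk : k ≤ 2 * N) :
    (-1 : R) ^ (2 * N - k) = (-1) ^ k := by
  rw [neg_one_pow_eq_pow_mod_two, neg_one_pow_eq_pow_mod_two (n := k)]
  congr 1
  omega

namespace Polynomial.Chebyshev

variable {R : Type*} [CommRing R]

variable (R) in
noncomputable def liftT (m : ℤ) : R[X] →ₗ[R] R[X] :=
  lsum fun k => LinearMap.toSpanSingleton R R[X] (T R (2 * k + m))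

theorem liftT_monomial (m : ℤ) (k : ℕ) (a : R) :
    liftT R m (monomial k a) = a • T R (2 * k + m) := by
  simp [liftT, sum_monomial_index]

theorem liftT_mul_X (m : ℤ) (p : R[X]) : liftT R m (p * X) = liftT R (m + 2) p := by
  induction p using Polynomial.induction_on' with
  | add p q hp hq => rw [add_mul, map_add, map_add, hp, hq]
  | monomial k a =>
    rw [← monomial_one_one_eq_X, monomial_mul_monomial, mul_one, liftT_monomial, liftT_monomial]
    congr 2
    push_cast
    ring

theorem liftT_mul_X_sq_add_one (m : ℤ) (p : R[X]) :
    liftT R m (p * (X ^ 2 + 1)) = 2 * T R 2 * liftT R (m + 2) p := by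
  induction p using Polynomial.induction_on' with
  | add p q hp hq => rw [add_mul, map_add, map_add, hp, hq, mul_add]
  | monomial k a =>
    rw [mul_add, mul_one, ← monomial_one_right_eq_X_pow, monomial_mul_monomial, mul_one, map_add,
      liftT_monomial, liftT_monomial, liftT_monomial, mul_smul_comm, mul_right_comm, T_mul_T,
      smul_add]
    congr 3 <;> push_cast <;> ring

theorem liftT_mul_X_sub_one_sq (m : ℤ) (p : R[X]) :
    liftT R m (p * (X - 1) ^ 2) = 4 * (X ^ 2 - 1) * liftT R (m + 2) p := by
  have h : p * (X - 1) ^ 2 = p * (X ^ 2 + 1) - 2 • (p * X) := by rw [two_nsmul]; ring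
  rw [h, map_sub, map_nsmul, liftT_mul_X_sq_add_one, liftT_mul_X, T_two, two_nsmul]
  ring

theorem liftT_X_sub_one_pow (N : ℕ) :
    liftT R (-2 * N) ((X - 1) ^ (2 * N)) = (4 * (X ^ 2 - 1)) ^ N := by
  induction N with
  | zero =>
    rw [mul_zero, pow_zero, pow_zero, ← monomial_zero_one, liftT_monomial]
    simp
  | succ N ih =>
    rw [mul_add, mul_one, pow_add, liftT_mul_X_sub_one_sq, pow_succ _ N, ← ih, mul_comm]
    congr 3
    push_cast
    ring

theorem four_mul_X_sq_sub_one_pow_eq_sum (N : ℕ) :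
    (4 * (X ^ 2 - 1) : R[X]) ^ N =
      ∑ k ∈ range (2 * N + 1), ((-1) ^ k * (2 * N).choose k : R) • T R (2 * k - 2 * N) := by
  have hdeg : ((X - 1 : R[X]) ^ (2 * N)).natDegree < 2 * N + 1 := by
    have := natDegree_pow_le_of_le (2 * N) (natDegree_X_sub_C_le (1 : R))
    rw [Polynomial.C_1, mul_one] at this
    omega
  rw [← liftT_X_sub_one_pow, liftT, lsum_apply, sum_over_range' _ (by simp) _ hdeg]
  refine sum_congr rfl fun k hk => ?_
  rw [sub_eq_add_neg, ← Polynomial.C_1, ← Polynomial.C_neg, coeff_X_add_C_pow,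
    neg_one_pow_two_mul_sub (Nat.lt_succ_iff.mp (mem_range.mp hk)),
    LinearMap.toSpanSingleton_apply]
  congr 2

theorem derivative_four_mul_X_sq_sub_one_pow_eq_sum (N : ℕ) :
    derivative ((4 * (X ^ 2 - 1) : R[X]) ^ N) =
      ∑ k ∈ range (2 * N + 1),
        ((-1) ^ k * (2 * N).choose k * (2 * k - 2 * N : ℤ) : R) • U R (2 * k - 2 * N - 1) := by
  rw [four_mul_X_sq_sub_one_pow_eq_sum, derivative_sum]
  refine sum_congr rfl fun k _ => ?_
  rw [derivative_smul, T_derivative_eq_U, ← Polynomial.C_eq_intCast, ← smul_eq_C_mul, smul_smul]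

theorem neg_four_mul_neg_one_pow_smul_sum_U (N : ℕ) :
    (-4 * (-1) ^ N : R) • ∑ j ∈ Icc 1 N,
        ((-1) ^ (j - 1) * j * (2 * N).choose (N - j) : R) • U R (2 * j - 1) =
      8 * (N : R[X]) * X * (4 * (X ^ 2 - 1)) ^ (N - 1) := by
  have hderiv : derivative ((4 * (X ^ 2 - 1) : R[X]) ^ N) =
      8 * (N : R[X]) * X * (4 * (X ^ 2 - 1)) ^ (N - 1) := by
    simp [derivative_pow, map_ofNat]
    ring
  rw [← hderiv, derivative_four_mul_X_sq_sub_one_pow_eq_sum,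
    Finset.sum_range_two_mul_add_one_eq_of_symm]
  · rw [smul_sum, smul_sum, sub_self, Int.cast_zero, mul_zero, zero_smul, zero_add]
    refine sum_congr rfl fun j hj => ?_
    rw [mem_Icc] at hj
    obtain ⟨i, rfl⟩ : ∃ i, j = i + 1 := ⟨j - 1, by omega⟩
    have hU : 2 * ((N + (i + 1) : ℕ) : ℤ) - 2 * N - 1 = 2 * ((i + 1 : ℕ) : ℤ) - 1 := by
      push_cast; ring
    rw [Nat.choose_symm_of_eq_add (by omega : 2 * N = N + (i + 1) + (N - (i + 1))), hU,
      ← Nat.cast_smul_eq_nsmul R, smul_smul, smul_smul]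
    congr 1
    push_cast
    ring
  · intro k hk
    have hU : 2 * ((2 * N - k : ℕ) : ℤ) - 2 * N - 1 = -(2 * k - 2 * N : ℤ) - 1 := by
      push_cast [hk]; ring
    rw [neg_one_pow_two_mul_sub hk, Nat.choose_symm hk, hU, U_neg_sub_one, smul_neg, ← neg_smul]
    congr 1
    push_cast [hk]
    ring

end Polynomial.Chebyshev

/-- `∑_{j=1}^N (-1)^{j-1} j C(2N, N-j) U_{2j-1}(z) = N 2^{2N-1} z (1-z²)^{N-1}` for `N ≥ 1`. -/
theorem stmt15 (N : ℕ) (hN : 1 ≤ N) :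
    ∑ j ∈ Finset.Icc 1 N,
        Polynomial.C ((-1 : ℚ) ^ (j - 1) * (j : ℚ) * ((2 * N).choose (N - j) : ℚ)) *
          Polynomial.Chebyshev.U ℚ (2 * (j : ℤ) - 1) =
      Polynomial.C ((N : ℚ) * 2 ^ (2 * N - 1)) * Polynomial.X *
        (1 - Polynomial.X ^ 2) ^ (N - 1) := by
  obtain ⟨M, rfl⟩ := Nat.exists_eq_add_of_le' hN
  refine smul_right_injective ℚ[X] (r := (-4 * (-1) ^ (M + 1) : ℚ)) (by simp) ?_
  simp only [← smul_eq_C_mul]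
  rw [Chebyshev.neg_four_mul_neg_one_pow_smul_sum_U,
    show (X ^ 2 - 1 : ℚ[X]) = -(1 - X ^ 2) by ring]
  simp only [smul_eq_C_mul, map_mul, map_pow, map_neg, map_one, map_ofNat, map_natCast]
  rw [Nat.add_sub_cancel, show 2 * (M + 1) - 1 = 2 * M + 1 by omega, pow_succ _ (2 * M), pow_mul,
    mul_neg, neg_pow, mul_pow]
  push_cast
  ring
end

section
/- For every integer N ≥ 2: Σ_{j=1}^{N} (−1)^j j(j−1) C(2N−1, N−j) U_{2j−2}(z) = (N−1) 2^{2N−3} (2Nz² − 1)(1 − z²)^{N−2}. -/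
/-!
With `z = (t + t⁻¹) / 2` one has `(t - t⁻¹) U_{2j-2}(z) = t^(2j-1) - t^(1-2j)`, so after
multiplying by `(t - t⁻¹) t^(2N-1)` the left side becomes a polynomial in `w = t²` in which the
`j`-th term pairs the exponents `N + j - 1` and `N - j`. That polynomial is `(-1)^N` times
`(X D - N)(X D - N + 1)` applied to `(X - 1)^(2N-1)`, because this operator multiplies `X^k` by
`(k - N)(k - N + 1)`; differentiating `(X - 1)^(2N-1)` twice instead gives the closed form. The two
sides of the theorem then agree at the infinitely many rational points `(t + t⁻¹) / 2`, `t > 1`.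
-/

open Polynomial Finset

theorem Finset.sum_range_two_mul_eq_sum_Icc {M : Type*} [AddCommMonoid M] (N : ℕ) (f : ℕ → M) :
    ∑ k ∈ range (2 * N), f k = ∑ j ∈ Icc 1 N, (f (N + j - 1) + f (N - j)) := by
  rw [two_mul, sum_range_add, ← sum_range_reflect f N, add_comm, ← sum_add_distrib]
  refine sum_nbij' (· + 1) (· - 1) ?_ ?_ ?_ ?_ ?_ <;> intro i hi <;>
    simp only [mem_range, mem_Icc] at hi ⊢ <;> first | omega | (congr 2; omega)

theorem neg_one_pow_add_mul_neg_one_pow {R : Type*} [Ring R] (a b : ℕ) :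
    (-1 : R) ^ (a + b) * (-1) ^ a = (-1) ^ b := by
  rw [← pow_add, add_right_comm, ← two_mul, pow_add, pow_mul, neg_one_sq, one_pow, one_mul]

theorem strictMonoOn_add_inv {K : Type*} [Field K] [LinearOrder K] [IsStrictOrderedRing K] :
    StrictMonoOn (fun t : K => t + t⁻¹) (Set.Ioi 1) := by
  intro s (hs : 1 < s) t (ht : 1 < t) hst
  have key : t + t⁻¹ - (s + s⁻¹) = (t - s) * (s * t - 1) / (s * t) := by
    field_simp
    ring
  have hpos : 0 < (t - s) * (s * t - 1) / (s * t) :=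
    div_pos (mul_pos (sub_pos.2 hst) (by nlinarith)) (by positivity)
  show s + s⁻¹ < t + t⁻¹
  linarith

namespace Polynomial

section EulerOperator

variable {R : Type*} [CommRing R]

/-- `(X D - a)(X D - a + 1)`, where `D` is the derivative. -/
noncomputable def eulerOp (a : R) : R[X] →ₗ[R] R[X] :=
  LinearMap.mulLeft R (X ^ 2) ∘ₗ derivative ∘ₗ derivative
    - LinearMap.mulLeft R (C (2 * a - 2) * X) ∘ₗ derivative + (a * (a - 1)) • LinearMap.id

theorem eulerOp_apply (a : R) (p : R[X]) : eulerOp a p =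
    X ^ 2 * derivative (derivative p) - C (2 * a - 2) * X * derivative p + C (a * (a - 1)) * p := by
  simp [eulerOp, smul_eq_C_mul, mul_assoc]

theorem X_mul_derivative_X_pow (k : ℕ) : X * derivative (X ^ k : R[X]) = C (k : R) * X ^ k := by
  rcases k with _ | k
  · simp
  · rw [derivative_X_pow, Nat.add_sub_cancel, mul_left_comm, ← pow_succ']

theorem X_sq_mul_derivative_derivative (p : R[X]) :
    X ^ 2 * derivative (derivative p) = X * derivative (X * derivative p) - X * derivative p := by
  rw [derivative_mul, derivative_X]
  ring

theorem eulerOp_C_mul_X_pow (a c : R) (k : ℕ) :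
    eulerOp a (C c * X ^ k) = C (c * ((k - a) * (k - a + 1))) * X ^ k := by
  rw [← smul_eq_C_mul, map_smul, smul_eq_C_mul, C_mul, mul_assoc, eulerOp_apply,
    X_sq_mul_derivative_derivative, mul_assoc (C _), X_mul_derivative_X_pow, derivative_C_mul,
    mul_left_comm, X_mul_derivative_X_pow]
  simp only [map_mul, map_sub, map_add, map_one, map_ofNat]
  ring

theorem eulerOp_X_sub_one_pow (N : ℕ) (hN : 2 ≤ N) :
    eulerOp (N : R) ((X - 1) ^ (2 * N - 1)) =
      C (N - 1 : R) * (C (N : R) * (X + 1) ^ 2 - 2 * X) * (X - 1) ^ (2 * N - 3) := by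
  obtain ⟨m, rfl⟩ : ∃ m, N = m + 2 := ⟨N - 2, by omega⟩
  rw [show 2 * (m + 2) - 1 = 2 * m + 3 by omega, show 2 * (m + 2) - 3 = 2 * m + 1 by omega]
  simp only [eulerOp_apply, derivative_pow, derivative_mul, derivative_C, derivative_sub,
    derivative_X, derivative_one, sub_zero, mul_one, zero_mul, zero_add,
    show 2 * m + 3 - 1 - 1 = 2 * m + 1 by omega]
  push_cast
  simp only [map_mul, map_sub, map_add, map_natCast, map_one, map_ofNat]
  ring

theorem X_sub_one_pow_eq_sum (n : ℕ) :
    ((X : R[X]) - 1) ^ n = ∑ k ∈ range (n + 1), C ((-1) ^ (n - k) * (n.choose k : R)) * X ^ k := by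
  rw [sub_eq_add_neg, add_pow]
  refine sum_congr rfl fun k _ => ?_
  simp only [map_mul, map_pow, map_neg, map_one, map_natCast]
  ring

def eulerBinomialCoeff (N k : ℕ) : R :=
  (-1) ^ (2 * N - 1 - k) * ((2 * N - 1).choose k : R) * ((k - N) * (k - N + 1))

theorem eulerOp_X_sub_one_pow_eq_sum (N : ℕ) (hN : 1 ≤ N) :
    eulerOp (N : R) ((X - 1) ^ (2 * N - 1)) =
      ∑ k ∈ range (2 * N), C (eulerBinomialCoeff N k) * X ^ k := by
  rw [X_sub_one_pow_eq_sum, map_sum, show 2 * N - 1 + 1 = 2 * N by omega]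
  simp only [eulerOp_C_mul_X_pow, eulerBinomialCoeff, mul_assoc]

theorem neg_one_pow_mul_eulerBinomialCoeff_add (N j : ℕ) (hj : 1 ≤ j) (hjN : j ≤ N) :
    (-1) ^ N * eulerBinomialCoeff N (N + j - 1) =
      (-1 : R) ^ j * j * (j - 1) * ((2 * N - 1).choose (N - j) : R) := by
  obtain ⟨i, rfl⟩ : ∃ i, j = i + 1 := ⟨j - 1, by omega⟩
  obtain ⟨a, rfl⟩ : ∃ a, N = a + (i + 1) := ⟨N - (i + 1), by omega⟩
  rw [eulerBinomialCoeff, show 2 * (a + (i + 1)) - 1 = a + (a + 2 * i + 1) by omega,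
    show a + (i + 1) + (i + 1) - 1 = a + 2 * i + 1 by omega, Nat.add_sub_cancel,
    show a + (i + 1) - (i + 1) = a by omega, Nat.choose_symm_add]
  push_cast
  linear_combination ((a + (a + 2 * i + 1)).choose (a + 2 * i + 1) * i * (i + 1) : R) *
    neg_one_pow_add_mul_neg_one_pow (R := R) a (i + 1)

theorem neg_one_pow_mul_eulerBinomialCoeff_sub (N j : ℕ) (hjN : j ≤ N) :
    (-1) ^ N * eulerBinomialCoeff N (N - j) =
      -((-1 : R) ^ j * j * (j - 1) * ((2 * N - 1).choose (N - j) : R)) := by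
  obtain ⟨a, rfl⟩ : ∃ a, N = a + j := ⟨N - j, by omega⟩
  rcases j with _ | i
  · simp [eulerBinomialCoeff]
  rw [eulerBinomialCoeff, show 2 * (a + (i + 1)) - 1 = a + (a + 2 * i + 1) by omega,
    Nat.add_sub_cancel, Nat.add_sub_cancel_left]
  push_cast
  linear_combination ((a + (a + 2 * i + 1)).choose a * i * (i + 1) : R) *
    neg_one_pow_add_mul_neg_one_pow (R := R) (a + (i + 1)) i

theorem sum_Icc_choose_mul_X_pow_sub_X_pow (N : ℕ) (hN : 2 ≤ N) :
    ∑ j ∈ Icc 1 N, C ((-1 : R) ^ j * j * (j - 1) * ((2 * N - 1).choose (N - j) : R)) *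
        (X ^ (N + j - 1) - X ^ (N - j)) =
      C ((-1) ^ N * (N - 1 : R)) * (C (N : R) * (X + 1) ^ 2 - 2 * X) * (X - 1) ^ (2 * N - 3) := by
  calc _ = ∑ j ∈ Icc 1 N, C ((-1) ^ N) * (C (eulerBinomialCoeff N (N + j - 1)) * X ^ (N + j - 1)
          + C (eulerBinomialCoeff N (N - j)) * X ^ (N - j)) := by
        refine sum_congr rfl fun j hj => ?_
        obtain ⟨hj, hjN⟩ := mem_Icc.1 hj
        rw [mul_add, ← mul_assoc, ← C_mul, ← mul_assoc, ← C_mul,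
          neg_one_pow_mul_eulerBinomialCoeff_add N j hj hjN,
          neg_one_pow_mul_eulerBinomialCoeff_sub N j hjN, C_neg, neg_mul, mul_sub, sub_eq_add_neg]
    _ = C ((-1) ^ N) * eulerOp (N : R) ((X - 1) ^ (2 * N - 1)) := by
        rw [eulerOp_X_sub_one_pow_eq_sum N (by omega), sum_range_two_mul_eq_sum_Icc, mul_sum]
    _ = _ := by
        rw [eulerOp_X_sub_one_pow N hN, C_mul]
        ring

end EulerOperator

namespace Chebyshev

variable {K : Type*} [Field K] {t : K}

theorem S_eval_add_inv_mul_sub_inv (ht : t ≠ 0) (n : ℤ) :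
    (S K n).eval (t + t⁻¹) * (t - t⁻¹) = t ^ (n + 1) - t⁻¹ ^ (n + 1) := by
  have ht' : t⁻¹ ≠ 0 := inv_ne_zero ht
  induction n using Polynomial.Chebyshev.induct with
  | zero => simp
  | one =>
    simp only [S_one, eval_X, Int.reduceAdd, zpow_ofNat]
    ring
  | add_two n ih1 ih2 =>
    rw [S_add_two, eval_sub, eval_mul, eval_X, sub_mul, mul_assoc, ih1, ih2]
    simp only [zpow_add₀ ht, zpow_add₀ ht', zpow_natCast]
    field_simp
    ring
  | neg_add_one n ih1 ih2 =>
    rw [S_sub_one, eval_sub, eval_mul, eval_X, sub_mul, mul_assoc, ih1, ih2]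
    simp only [zpow_add₀ ht, zpow_add₀ ht', zpow_sub₀ ht, zpow_sub₀ ht', zpow_neg, zpow_natCast]
    field_simp
    ring

theorem U_eval_half_add_inv_mul_sub_inv [NeZero (2 : K)] (ht : t ≠ 0) (n : ℤ) :
    (U K n).eval ((t + t⁻¹) / 2) * (t - t⁻¹) = t ^ (n + 1) - t⁻¹ ^ (n + 1) := by
  rw [← S_comp_two_mul_X, eval_comp, eval_mul, eval_X, eval_ofNat,
    mul_div_cancel₀ _ two_ne_zero, S_eval_add_inv_mul_sub_inv ht]

theorem U_two_mul_sub_two_eval_half_add_inv [NeZero (2 : K)] (ht : t ≠ 0) {N j : ℕ} (hj : 1 ≤ j)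
    (hjN : j ≤ N) :
    (U K (2 * (j : ℤ) - 2)).eval ((t + t⁻¹) / 2) * ((t - t⁻¹) * t ^ (2 * N - 1)) =
      (t ^ 2) ^ (N + j - 1) - (t ^ 2) ^ (N - j) := by
  obtain ⟨i, rfl⟩ : ∃ i, j = i + 1 := ⟨j - 1, by omega⟩
  obtain ⟨a, rfl⟩ : ∃ a, N = a + (i + 1) := ⟨N - (i + 1), by omega⟩
  rw [← mul_assoc, U_eval_half_add_inv_mul_sub_inv ht,
    show 2 * ((i + 1 : ℕ) : ℤ) - 2 + 1 = ((2 * i + 1 : ℕ) : ℤ) by push_cast; ring, zpow_natCast,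
    zpow_natCast, show 2 * (a + (i + 1)) - 1 = 2 * a + 2 * i + 1 by omega,
    show a + (i + 1) + (i + 1) - 1 = a + 2 * i + 1 by omega,
    show a + (i + 1) - (i + 1) = a by omega, inv_pow]
  field_simp
  ring

theorem sum_choose_mul_U_eval_half_add_inv [NeZero (2 : K)] (ht : t ≠ 0) (ht1 : t ^ 2 ≠ 1)
    (N : ℕ) (hN : 2 ≤ N) :
    ∑ j ∈ Icc 1 N, (-1 : K) ^ j * j * (j - 1) * ((2 * N - 1).choose (N - j) : K) *
        (U K (2 * (j : ℤ) - 2)).eval ((t + t⁻¹) / 2) =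
      (N - 1) * 2 ^ (2 * N - 3) * (2 * N * ((t + t⁻¹) / 2) ^ 2 - 1) *
        (1 - ((t + t⁻¹) / 2) ^ 2) ^ (N - 2) := by
  have hsub : t - t⁻¹ ≠ 0 := by
    rw [sub_ne_zero]
    rintro h
    exact ht1 (by rw [sq, ← mul_inv_cancel₀ ht, ← h])
  apply mul_right_cancel₀ (mul_ne_zero hsub (pow_ne_zero (2 * N - 1) ht))
  have key := congrArg (eval (t ^ 2)) (sum_Icc_choose_mul_X_pow_sub_X_pow (R := K) N hN)
  simp only [eval_finsetSum, eval_mul, eval_C, eval_sub, eval_add, eval_pow, eval_X, eval_ofNat,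
    eval_one] at key
  calc _ = ∑ j ∈ Icc 1 N, (-1 : K) ^ j * j * (j - 1) * ((2 * N - 1).choose (N - j) : K) *
          ((t ^ 2) ^ (N + j - 1) - (t ^ 2) ^ (N - j)) := by
        rw [sum_mul]
        refine sum_congr rfl fun j hj => ?_
        obtain ⟨hj, hjN⟩ := mem_Icc.1 hj
        rw [mul_assoc, U_two_mul_sub_two_eval_half_add_inv ht hj hjN]
    _ = _ := by
        have hz : 1 - ((t + t⁻¹) / 2) ^ 2 = -((t ^ 2 - 1) / (2 * t)) ^ 2 := by
          field_simp
          ring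
        rw [key, hz, neg_pow (((t ^ 2 - 1) / (2 * t)) ^ 2), ← pow_mul, div_pow (t ^ 2 - 1) (2 * t)]
        obtain ⟨m, rfl⟩ : ∃ m, N = m + 2 := ⟨N - 2, by omega⟩
        rw [show 2 * (m + 2) - 3 = 2 * m + 1 by omega, show 2 * (m + 2) - 1 = 2 * m + 3 by omega,
          Nat.add_sub_cancel]
        field_simp
        ring

end Chebyshev

end Polynomial

/-- `∑_{j=1}^N (-1)^j j(j-1) C(2N-1, N-j) U_{2j-2}(z)
  = (N-1) 2^{2N-3} (2Nz² - 1)(1-z²)^{N-2}` for `N ≥ 2`. -/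
theorem stmt16 (N : ℕ) (hN : 2 ≤ N) :
    ∑ j ∈ Finset.Icc 1 N,
        Polynomial.C ((-1 : ℚ) ^ j * (j : ℚ) * ((j : ℚ) - 1) *
            ((2 * N - 1).choose (N - j) : ℚ)) *
          Polynomial.Chebyshev.U ℚ (2 * (j : ℤ) - 2) =
      Polynomial.C (((N : ℚ) - 1) * 2 ^ (2 * N - 3)) *
        (Polynomial.C (2 * (N : ℚ)) * Polynomial.X ^ 2 - 1) *
        (1 - Polynomial.X ^ 2) ^ (N - 2) := by
  apply eq_of_infinite_eval_eq
  have hinj : Set.InjOn (fun t : ℚ => (t + t⁻¹) / 2) (Set.Ioi 1) := fun s hs t ht hst =>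
    strictMonoOn_add_inv.injOn hs ht ((div_left_inj' two_ne_zero).1 hst)
  refine ((Set.Ioi_infinite 1).image hinj).mono ?_
  rintro _ ⟨t, ht, rfl⟩
  have ht0 : t ≠ 0 := (zero_lt_one.trans ht).ne'
  have ht1 : t ^ 2 ≠ 1 := (one_lt_pow₀ ht two_ne_zero).ne'
  simpa [eval_finsetSum] using Chebyshev.sum_choose_mul_U_eval_half_add_inv ht0 ht1 N hN
end

section
/- For every integer N ≥ 0: Σ_{j=0}^{N} (−1)^j (j+1) C(2N+2, N−j) U_{2j+1}(z) = (2N+2) z Σ_{j=0}^{N} (−1)^j C(2N+1, N−j) U_{2j}(z), as polynomials in z. -/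
open Polynomial Finset

lemma stmt17_coeff (N j : ℕ) (h : j < N) :
    ((j : ℚ) + 1) * ((2 * N + 2).choose (N - j) : ℚ) =
      ((N : ℚ) + 1) * ((2 * N + 1).choose (N - j) : ℚ) -
        ((N : ℚ) + 1) * ((2 * N + 1).choose (N - j - 1) : ℚ) := by
  have hk : N - j = (N - j - 1) + 1 := by omega
  have pascal : (2 * N + 2).choose (N - j) =
      (2 * N + 1).choose (N - j - 1) + (2 * N + 1).choose (N - j) := by
    rw [show 2 * N + 2 = (2 * N + 1) + 1 from rfl, hk, Nat.choose_succ_succ,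
      Nat.succ_eq_add_one, ← hk]
  have ratio : (2 * N + 1).choose (N - j) * (N - j) =
      (2 * N + 1).choose (N - j - 1) * (N + j + 2) := by
    have h2 := Nat.choose_succ_right_eq (2 * N + 1) (N - j - 1)
    rw [← hk] at h2
    rw [h2]
    congr 1
    omega
  have hNj : ((N - j : ℕ) : ℚ) = (N : ℚ) - j := by
    rw [Nat.cast_sub h.le]
  have pascalQ : ((2 * N + 2).choose (N - j) : ℚ) =
      ((2 * N + 1).choose (N - j - 1) : ℚ) + ((2 * N + 1).choose (N - j) : ℚ) := by
    exact_mod_cast congrArg (Nat.cast : ℕ → ℚ) pascal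
  have ratioQ : ((2 * N + 1).choose (N - j) : ℚ) * ((N : ℚ) - j) =
      ((2 * N + 1).choose (N - j - 1) : ℚ) * ((N : ℚ) + j + 2) := by
    have := congrArg (Nat.cast : ℕ → ℚ) ratio
    push_cast at this
    rw [hNj] at this
    linarith [this]
  linear_combination ((j : ℚ) + 1) * pascalQ - ratioQ

/-- `∑_{j=0}^N (-1)^j (j+1) C(2N+2, N-j) U_{2j+1}(z)
  = (2N+2) z ∑_{j=0}^N (-1)^j C(2N+1, N-j) U_{2j}(z)`. -/
theorem stmt17 (N : ℕ) :
    ∑ j ∈ Finset.range (N + 1),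
        Polynomial.C ((-1 : ℚ) ^ j * ((j : ℚ) + 1) * ((2 * N + 2).choose (N - j) : ℚ)) *
          Polynomial.Chebyshev.U ℚ (2 * j + 1) =
      Polynomial.C (2 * (N : ℚ) + 2) * Polynomial.X *
        ∑ j ∈ Finset.range (N + 1),
          Polynomial.C ((-1 : ℚ) ^ j * ((2 * N + 1).choose (N - j) : ℚ)) *
            Polynomial.Chebyshev.U ℚ (2 * j) := by
  set A : ℕ → ℚ := fun j => ((N : ℚ) + 1) * ((-1 : ℚ) ^ j * ((2 * N + 1).choose (N - j) : ℚ))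
    with hA
  have key : ∀ n : ℤ, (2 * X : ℚ[X]) * Chebyshev.U ℚ n
      = Chebyshev.U ℚ (n + 1) + Chebyshev.U ℚ (n - 1) := by
    intro n
    have := Chebyshev.U_sub_one ℚ n
    linear_combination -this
  have step1 : Polynomial.C (2 * (N : ℚ) + 2) * Polynomial.X *
        ∑ j ∈ Finset.range (N + 1),
          Polynomial.C ((-1 : ℚ) ^ j * ((2 * N + 1).choose (N - j) : ℚ)) *
            Polynomial.Chebyshev.U ℚ (2 * j)
      = ∑ j ∈ Finset.range (N + 1),
          (Polynomial.C (A j) * Chebyshev.U ℚ (2 * j + 1) +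
           Polynomial.C (A j) * Chebyshev.U ℚ (2 * j - 1)) := by
    rw [Finset.mul_sum]
    refine Finset.sum_congr rfl fun j _ => ?_
    have hkey := key (2 * j)
    calc Polynomial.C (2 * (N : ℚ) + 2) * Polynomial.X *
          (Polynomial.C ((-1 : ℚ) ^ j * ((2 * N + 1).choose (N - j) : ℚ)) *
            Chebyshev.U ℚ (2 * j))
        = Polynomial.C (A j) * ((2 * X : ℚ[X]) * Chebyshev.U ℚ (2 * j)) := by
          have hC : Polynomial.C (2 * (N : ℚ) + 2) = 2 * Polynomial.C ((N : ℚ) + 1) := by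
            rw [show (2 * (N : ℚ) + 2) = 2 * ((N : ℚ) + 1) by ring, map_mul, map_ofNat]
          rw [hC, hA]
          simp only [map_mul]
          ring
      _ = Polynomial.C (A j) * Chebyshev.U ℚ (2 * j + 1) +
           Polynomial.C (A j) * Chebyshev.U ℚ (2 * j - 1) := by
          rw [hkey]; ring
  rw [step1, Finset.sum_add_distrib]
  have step2 : ∑ j ∈ Finset.range (N + 1), Polynomial.C (A j) * Chebyshev.U ℚ (2 * j - 1)
      = ∑ j ∈ Finset.range N, Polynomial.C (A (j + 1)) * Chebyshev.U ℚ (2 * j + 1) := by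
    rw [Finset.sum_range_succ']
    have h0 : Polynomial.C (A 0) * Chebyshev.U ℚ (2 * (0 : ℕ) - 1) = 0 := by
      norm_num [Chebyshev.U_neg_one]
    rw [h0, add_zero]
    refine Finset.sum_congr rfl fun j _ => ?_
    congr 1
    push_cast
    ring_nf
  rw [step2]
  rw [Finset.sum_range_succ, Finset.sum_range_succ
    (fun j => Polynomial.C (A j) * Chebyshev.U ℚ (2 * j + 1))]
  have hlast : Polynomial.C ((-1 : ℚ) ^ N * ((N : ℚ) + 1) * ((2 * N + 2).choose (N - N) : ℚ)) *
        Chebyshev.U ℚ (2 * N + 1)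
      = Polynomial.C (A N) * Chebyshev.U ℚ (2 * N + 1) := by
    congr 1
    rw [hA]
    simp [Nat.sub_self]
    ring
  rw [hlast]
  rw [add_right_comm, ← Finset.sum_add_distrib]
  congr 1
  refine Finset.sum_congr rfl fun j hj => ?_
  rw [Finset.mem_range] at hj
  rw [← add_mul]
  congr 1
  rw [hA]
  simp only
  rw [← Polynomial.C_add]
  congr 1
  have hcoeff := stmt17_coeff N j hj
  have hsub : N - (j + 1) = N - j - 1 := by omega
  rw [hsub, pow_succ]
  linear_combination ((-1 : ℚ) ^ j) * hcoeff
end
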